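/- arXiv:1902.10227 — 11 statements merged into one kernel-verified Lean document; each statement's English description precedes it below -/
import Mathlib

section
/- Let N and Q be groups and let φ : Q → Aut(N) and f : Q × Q → N satisfy the extension conditions (E1) and (E2). Then there exists a group G, an injective group homomorphism ι : N → G whose range is a normal subgroup of G, and a function c : Q → G, such that: every element of G can be written uniquely in the form ι(n) · c(q) with n ∈ N, q ∈ Q; c(q) · ι(n) · c(q)⁻¹ = ι(φ_q(n)) for all n ∈ N, q ∈ Q; and c(q₁) · c(q₂) = ι(f(q₁,q₂)) · c(q₁q₂) for all q₁, q₂ ∈ Q. In particular, G is an extension of Q by N with data (φ, f): the quotient G/ι(N) is isomorphic to Q. -/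
/-!
The extension is Schreier's crossed product: `N × Q` with the multiplication
`(n₁, q₁)(n₂, q₂) = (n₁ · φ_{q₁}(n₂) · f(q₁, q₂), q₁q₂)`. Associativity is (E1) followed by (E2).
Specialising (E1) and (E2) at the identity shows that `φ_1` is conjugation by `f(1, 1)`,
`f(1, q) = f(1, 1)` and `f(q, 1) = φ_q(f(1, 1))`; hence `(f(1, 1)⁻¹, 1)` is the identity,
`ι n = (n f(1, 1)⁻¹, 1)` is a homomorphism and, with `c q = (1, q)`, `ι n · c q = (n, q)`.
The image of `ι` is the kernel of the projection onto `Q`.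
-/

universe u v

/-- A witness that a group `G` is an extension of `Q` by `N` with data `(φ, f)`:
`ι : N → G` is an injective homomorphism with normal range, every element of `G`
is uniquely of the form `ι n * c q`, conjugation by `c q` realizes `φ q` on `N`,
the `c q` compose according to the 2-cocycle `f`, and `G ⧸ ι(N) ≅ Q`. -/
structure GroupExtensionWitness {N : Type u} {Q : Type v} [Group N] [Group Q]
    (φ : Q → MulAut N) (f : Q × Q → N) : Type (max u v + 1) where
  carrier : Type (max u v)
  [grp : Group carrier]
  ι : N →* carrier
  c : Q → carrier
  ι_injective : Function.Injective ι
  range_normal : ι.range.Normal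
  unique_decomp : ∀ g : carrier, ∃! p : N × Q, g = ι p.1 * c p.2
  conj_eq : ∀ (q : Q) (n : N), c q * ι n * (c q)⁻¹ = ι (φ q n)
  cocycle_eq : ∀ q₁ q₂ : Q, c q₁ * c q₂ = ι (f (q₁, q₂)) * c (q₁ * q₂)
  quotient_iso : Nonempty ((carrier ⧸ ι.range) ≃* Q)


variable {N : Type u} {Q : Type v} [Group N] [Group Q]

structure IsExtensionData (φ : Q → MulAut N) (f : Q × Q → N) : Prop where
  conj : ∀ (q₁ q₂ : Q) (n : N), φ q₁ (φ q₂ n) = f (q₁, q₂) * φ (q₁ * q₂) n * (f (q₁, q₂))⁻¹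
  cocycle : ∀ q₁ q₂ q₃ : Q,
    f (q₁, q₂) * f (q₁ * q₂, q₃) = φ q₁ (f (q₂, q₃)) * f (q₁, q₂ * q₃)

namespace IsExtensionData

variable {φ : Q → MulAut N} {f : Q × Q → N}

theorem map_one_f_one_left (h : IsExtensionData φ f) (q : Q) : φ 1 (f (1, q)) = f (1, 1) := by
  have h₁₁q := h.cocycle 1 1 q
  simp only [one_mul] at h₁₁q
  exact (mul_right_cancel h₁₁q).symm

theorem map_one_apply (h : IsExtensionData φ f) (n : N) :
    φ 1 n = f (1, 1) * n * (f (1, 1))⁻¹ := by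
  have hfix : φ 1 (f (1, 1)) = f (1, 1) := h.map_one_f_one_left 1
  have h₁₁n := h.conj 1 1 n
  simp only [one_mul] at h₁₁n
  apply (φ 1).injective
  rw [h₁₁n, map_mul, map_mul, hfix, map_inv, hfix]

theorem f_one_left (h : IsExtensionData φ f) (q : Q) : f (1, q) = f (1, 1) := by
  have hq := h.map_one_f_one_left q
  rw [h.map_one_apply, mul_inv_eq_iff_eq_mul] at hq
  exact mul_left_cancel hq

theorem f_one_right (h : IsExtensionData φ f) (q : Q) : f (q, 1) = φ q (f (1, 1)) := by
  have hq₁₁ := h.cocycle q 1 1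
  simp only [mul_one] at hq₁₁
  exact mul_right_cancel hq₁₁

/-- Indexed by the proof `h` so that its group structure can be an instance. -/
@[ext]
structure CrossedProduct (h : IsExtensionData φ f) : Type (max u v) where
  n : N
  q : Q

namespace CrossedProduct

variable {h : IsExtensionData φ f}

instance : Mul (CrossedProduct h) := ⟨fun x y => ⟨x.n * φ x.q y.n * f (x.q, y.q), x.q * y.q⟩⟩
instance : One (CrossedProduct h) := ⟨⟨(f (1, 1))⁻¹, 1⟩⟩
instance : Inv (CrossedProduct h) :=
  ⟨fun x => ⟨(f (1, 1))⁻¹ * (f (x.q⁻¹, x.q))⁻¹ * (φ x.q⁻¹ x.n)⁻¹, x.q⁻¹⟩⟩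

theorem mul_def (x y : CrossedProduct h) :
    x * y = ⟨x.n * φ x.q y.n * f (x.q, y.q), x.q * y.q⟩ := rfl

theorem one_def : (1 : CrossedProduct h) = ⟨(f (1, 1))⁻¹, 1⟩ := rfl

theorem inv_def (x : CrossedProduct h) :
    x⁻¹ = ⟨(f (1, 1))⁻¹ * (f (x.q⁻¹, x.q))⁻¹ * (φ x.q⁻¹ x.n)⁻¹, x.q⁻¹⟩ := rfl

protected theorem mul_assoc (x y z : CrossedProduct h) : x * y * z = x * (y * z) := by
  ext
  · simp only [mul_def, map_mul, h.conj x.q y.q z.n, mul_assoc, ← h.cocycle x.q y.q z.q,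
      inv_mul_cancel_left]
  · exact mul_assoc x.q y.q z.q

protected theorem one_mul (x : CrossedProduct h) : 1 * x = x := by
  ext
  · simp only [mul_def, one_def, h.map_one_apply, h.f_one_left]
    group
  · exact one_mul x.q

protected theorem inv_mul_cancel (x : CrossedProduct h) : x⁻¹ * x = 1 := by
  ext
  · simp only [mul_def, inv_def, one_def]
    group
  · exact inv_mul_cancel x.q

instance : Group (CrossedProduct h) :=
  Group.ofLeftAxioms CrossedProduct.mul_assoc CrossedProduct.one_mul
    CrossedProduct.inv_mul_cancel

variable (h)

def incl : N →* CrossedProduct h where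
  toFun n := ⟨n * (f (1, 1))⁻¹, 1⟩
  map_one' := by rw [one_mul]; rfl
  map_mul' n₁ n₂ := by
    ext
    · simp only [mul_def, h.map_one_apply]
      group
    · exact (one_mul 1).symm

def sec (q : Q) : CrossedProduct h := ⟨1, q⟩

def proj : CrossedProduct h →* Q where
  toFun := CrossedProduct.q
  map_one' := rfl
  map_mul' _ _ := rfl

theorem incl_mul_sec (n : N) (q : Q) : incl h n * sec h q = ⟨n, q⟩ := by
  ext
  · simp only [incl, sec, mul_def, MonoidHom.coe_mk, OneHom.coe_mk, map_one, mul_one,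
      h.f_one_left, inv_mul_cancel_right]
  · exact one_mul q

theorem sec_mul_incl (q : Q) (n : N) : sec h q * incl h n = incl h (φ q n) * sec h q := by
  rw [incl_mul_sec]
  ext
  · simp only [incl, sec, mul_def, MonoidHom.coe_mk, OneHom.coe_mk, one_mul, map_mul, map_inv]
    rw [h.f_one_right q, inv_mul_cancel_right]
  · exact mul_one q

theorem sec_mul_sec (q₁ q₂ : Q) : sec h q₁ * sec h q₂ = incl h (f (q₁, q₂)) * sec h (q₁ * q₂) := by
  rw [incl_mul_sec]
  ext
  · simp only [sec, mul_def, map_one, one_mul]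
  · rfl

theorem incl_injective : Function.Injective (incl h) :=
  fun _ _ hn => mul_right_cancel (congrArg CrossedProduct.n hn)

theorem proj_surjective : Function.Surjective (proj h) := fun q => ⟨sec h q, rfl⟩

theorem range_incl_eq_ker_proj : (incl h).range = (proj h).ker := by
  ext x
  constructor
  · rintro ⟨n, rfl⟩
    rfl
  · intro hx
    refine ⟨x.n * f (1, 1), ?_⟩
    ext
    · exact mul_inv_cancel_right x.n (f (1, 1))
    · exact hx.symm

instance normal_range_incl : (incl h).range.Normal :=
  range_incl_eq_ker_proj h ▸ (proj h).normal_ker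

theorem existsUnique_eq_incl_mul_sec (g : CrossedProduct h) :
    ∃! p : N × Q, g = incl h p.1 * sec h p.2 := by
  refine ⟨(g.n, g.q), (incl_mul_sec h g.n g.q).symm, ?_⟩
  rintro ⟨n, q⟩ hg
  rw [incl_mul_sec] at hg
  rw [hg]

theorem sec_mul_incl_mul_inv_sec (q : Q) (n : N) :
    sec h q * incl h n * (sec h q)⁻¹ = incl h (φ q n) := by
  rw [sec_mul_incl, mul_inv_cancel_right]

noncomputable def quotientRangeInclEquiv : CrossedProduct h ⧸ (incl h).range ≃* Q :=
  (QuotientGroup.quotientMulEquivOfEq (range_incl_eq_ker_proj h)).trans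
    (QuotientGroup.quotientKerEquivOfSurjective _ (proj_surjective h))

end CrossedProduct

end IsExtensionData

open IsExtensionData CrossedProduct

/-- If `φ : Q → Aut N` and `f : Q × Q → N` satisfy the extension conditions
(E1) `φ_{q₁} ∘ φ_{q₂} = inn_{f(q₁,q₂)} ∘ φ_{q₁q₂}` and
(E2) `f(q₁,q₂)·f(q₁q₂,q₃) = φ_{q₁}(f(q₂,q₃))·f(q₁,q₂q₃)`,
then there exists an extension of `Q` by `N` with data `(φ, f)`. -/
theorem extension_exists_of_data {N : Type u} {Q : Type v} [Group N] [Group Q]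
    (φ : Q → MulAut N) (f : Q × Q → N)
    (hE1 : ∀ (q₁ q₂ : Q) (n : N),
      φ q₁ (φ q₂ n) = f (q₁, q₂) * φ (q₁ * q₂) n * (f (q₁, q₂))⁻¹)
    (hE2 : ∀ q₁ q₂ q₃ : Q,
      f (q₁, q₂) * f (q₁ * q₂, q₃) = φ q₁ (f (q₂, q₃)) * f (q₁, q₂ * q₃)) :
    Nonempty (GroupExtensionWitness φ f) := by
  have h : IsExtensionData φ f := ⟨hE1, hE2⟩
  exact ⟨{ carrier := CrossedProduct h
           ι := incl h
           c := sec h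
           ι_injective := incl_injective h
           range_normal := inferInstance
           unique_decomp := existsUnique_eq_incl_mul_sec h
           conj_eq := sec_mul_incl_mul_inv_sec h
           cocycle_eq := sec_mul_sec h
           quotient_iso := ⟨quotientRangeInclEquiv h⟩ }⟩
end

section
/- Let G and G' be groups with normal subgroups N ⊴ G and N' ⊴ G', with quotient projections π : G → Q := G/N and π' : G' → Q' := G'/N', and sections c : Q → G, c' : Q' → G' of the projections. Let (φ, f) and (φ', f') be the induced data of these sections. Suppose ψ : G' → G is a group isomorphism, α : N' → N and β : Q' → Q are group isomorphisms, and n : Q' → N' is a family of elements such that ψ(x) = α(x) for every x ∈ N' and ψ(c'(q)) = α(n_q) · c(β(q)) for every q ∈ Q'. Then for all q₁, q₂ ∈ Q': (i) φ_{β(q₁)} = inn_{α(n_{q₁})⁻¹} ∘ α ∘ φ'_{q₁} ∘ α⁻¹, where inn_m denotes conjugation by m in N; and (ii) f(β(q₁), β(q₂)) = φ_{β(q₁)}(α(n_{q₂})⁻¹) · α(n_{q₁}⁻¹ · f'(q₁,q₂) · n_{q₁q₂}). -/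
/-- Pseudo-congruent extensions have compatible data. Let `N ⊴ G`, `N' ⊴ G'`,
with sections `c`, `c'` of the quotient maps inducing the data
`φ_q(n) = c(q) n c(q)⁻¹`, `f(q₁,q₂) = c(q₁) c(q₂) c(q₁q₂)⁻¹` (and primed
analogues). If `ψ : G' ≃ G` is an isomorphism restricting to `α : N' ≃ N`
on `N'` and satisfying `ψ(c'(q)) = α(n_q) · c(β(q))` for an isomorphism
`β : Q' ≃ Q` and a family `n : Q' → N'`, then
(i) `φ_{β(q₁)} = inn_{α(n_{q₁})⁻¹} ∘ α ∘ φ'_{q₁} ∘ α⁻¹` and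
(ii) `f(β(q₁),β(q₂)) = φ_{β(q₁)}(α(n_{q₂})⁻¹) · α(n_{q₁}⁻¹ f'(q₁,q₂) n_{q₁q₂})`.
Both identities are stated elementwise in `G` (using `ψ = α` on `N'`). -/
theorem pseudo_congruent_extension_data
    {G : Type*} [Group G] {G' : Type*} [Group G']
    (N : Subgroup G) [N.Normal] (N' : Subgroup G') [N'.Normal]
    (c : G ⧸ N → G) (hc : ∀ q : G ⧸ N, (QuotientGroup.mk (c q) : G ⧸ N) = q)
    (c' : G' ⧸ N' → G') (hc' : ∀ q : G' ⧸ N', (QuotientGroup.mk (c' q) : G' ⧸ N') = q)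
    (ψ : G' ≃* G) (α : N' ≃* N) (β : (G' ⧸ N') ≃* (G ⧸ N)) (n : G' ⧸ N' → N')
    (hψα : ∀ x : N', ψ (x : G') = ((α x : N) : G))
    (hψc : ∀ q : G' ⧸ N', ψ (c' q) = ((α (n q) : N) : G) * c (β q)) :
    (∀ (q₁ : G' ⧸ N') (m : N'),
      c (β q₁) * ((α m : N) : G) * (c (β q₁))⁻¹ =
        (((α (n q₁) : N) : G))⁻¹ * ψ (c' q₁ * (m : G') * (c' q₁)⁻¹) *
          ((α (n q₁) : N) : G)) ∧
    (∀ q₁ q₂ : G' ⧸ N',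
      c (β q₁) * c (β q₂) * (c (β q₁ * β q₂))⁻¹ =
        (c (β q₁) * (((α (n q₂) : N) : G))⁻¹ * (c (β q₁))⁻¹) *
          ψ (((n q₁ : G'))⁻¹ * (c' q₁ * c' q₂ * (c' (q₁ * q₂))⁻¹) *
            (n (q₁ * q₂) : G'))) := by
  have hcβ : ∀ q : G' ⧸ N', c (β q) = (((α (n q) : N) : G))⁻¹ * ψ (c' q) := by
    intro q; rw [hψc]; group
  refine ⟨fun q₁ m => ?_, fun q₁ q₂ => ?_⟩
  · rw [hcβ, map_mul, map_mul, map_inv, hψα]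
    group
  · have h12 : c (β q₁ * β q₂) = (((α (n (q₁ * q₂)) : N) : G))⁻¹ * ψ (c' (q₁ * q₂)) := by
      rw [← map_mul β, hcβ]
    rw [h12]
    simp only [hcβ, map_mul, map_inv, hψα]
    group
end

section
/- Let G be a non-abelian group and let N be a subgroup of G of index 2 that is isomorphic (as a group) to the free abelian group ℤ^d. Then N is characteristic in G: for every automorphism l of G, l(N) = N. In particular, N is normal in G. -/
/-- Let `G` be a non-abelian group and `N` an index-2 subgroup isomorphic to the
free abelian group `ℤ^d`. Then `N` is characteristic in `G` (invariant under every
automorphism of `G`); in particular `N` is normal in `G`. -/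
theorem index_two_free_abelian_characteristic
    {G : Type*} [Group G] (hG : ¬ ∀ a b : G, a * b = b * a)
    (d : ℕ) (N : Subgroup G) (hidx : N.index = 2)
    (hiso : Nonempty (N ≃* Multiplicative (Fin d → ℤ))) :
    (∀ l : G ≃* G, N.map l.toMonoidHom = N) ∧ N.Normal := by
  obtain ⟨e⟩ := hiso
  -- N is abelian
  have habel : ∀ x y : G, x ∈ N → y ∈ N → x * y = y * x := by
    intro x y hx hy
    have h : ((⟨x, hx⟩ : N) * ⟨y, hy⟩ : N) = (⟨y, hy⟩ : N) * ⟨x, hx⟩ :=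
      e.injective (by rw [map_mul, map_mul, mul_comm])
    exact Subtype.ext_iff.mp h
  -- N is torsion-free (only need squares)
  have htf : ∀ x : G, x ∈ N → x * x = 1 → x = 1 := by
    intro x hx h2
    have h : ((⟨x, hx⟩ : N) * ⟨x, hx⟩ : N) = 1 := Subtype.ext h2
    have h' : e ⟨x, hx⟩ * e ⟨x, hx⟩ = 1 := by rw [← map_mul, h, map_one]
    have h'' : Multiplicative.toAdd (e ⟨x, hx⟩) + Multiplicative.toAdd (e ⟨x, hx⟩) = 0 := h'
    have hz : Multiplicative.toAdd (e ⟨x, hx⟩) = 0 := by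
      funext i
      have h3 := congrFun h'' i
      simp only [Pi.add_apply, Pi.zero_apply] at h3 ⊢
      omega
    have : (⟨x, hx⟩ : N) = 1 := by
      apply e.injective
      rw [map_one]
      exact hz
    exact Subtype.ext_iff.mp this
  -- N is normal (index 2)
  have hnorm : N.Normal := by
    constructor
    intro n hn g
    rw [Subgroup.mul_mem_iff_of_index_two hidx, Subgroup.mul_mem_iff_of_index_two hidx]
    simp [hn]
  refine ⟨?_, hnorm⟩
  intro l
  by_contra hne
  set M := N.map l.toMonoidHom with hM
  have hmemM : ∀ x : G, x ∈ M ↔ l.symm x ∈ N := fun x => Subgroup.mem_map_equiv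
  have hMeq : M = N.comap l.symm.toMonoidHom := by
    ext x
    exact hmemM x
  have hMidx : M.index = 2 := by
    rw [hMeq, Subgroup.index_comap_of_surjective N l.symm.surjective]
    exact hidx
  have habelM : ∀ x y : G, x ∈ M → y ∈ M → x * y = y * x := by
    intro x y hx hy
    apply l.symm.injective
    rw [map_mul, map_mul, habel _ _ ((hmemM x).mp hx) ((hmemM y).mp hy)]
  have hnormM : M.Normal := by
    constructor
    intro n hn g
    rw [Subgroup.mul_mem_iff_of_index_two hMidx, Subgroup.mul_mem_iff_of_index_two hMidx]
    simp [hn]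
  -- get b ∈ M \ N
  obtain ⟨b, hbM, hbN⟩ : ∃ b, b ∈ M ∧ b ∉ N := by
    by_contra h
    push_neg at h
    have hle : M ≤ N := fun x hx => h x hx
    have h1 : M.relIndex N * N.index = M.index := Subgroup.relIndex_mul_index hle
    rw [hidx, hMidx] at h1
    have : M.relIndex N = 1 := by omega
    have hle' : N ≤ M := Subgroup.relIndex_eq_one.mp this
    exact hne (le_antisymm hle hle')
  -- b commutes with every element of N
  have hbN' : ∀ a ∈ N, b * a = a * b := by
    intro a ha
    set c := b * a * b⁻¹ * a⁻¹ with hc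
    have hcN : c ∈ N := mul_mem (hnorm.conj_mem a ha b) (inv_mem ha)
    have hcM : c ∈ M := by
      have h1 : a * b⁻¹ * a⁻¹ ∈ M := hnormM.conj_mem b⁻¹ (inv_mem hbM) a
      have h2 : b * (a * b⁻¹ * a⁻¹) ∈ M := mul_mem hbM h1
      have : b * (a * b⁻¹ * a⁻¹) = c := by rw [hc]; group
      rwa [this] at h2
    have hb2N : b * b ∈ N := Subgroup.mul_self_mem_of_index_two hidx b
    -- b² a b⁻² = a  since b² ∈ N and N abelian
    have key1 : (b * b) * a * (b * b)⁻¹ = a := by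
      rw [habel _ _ hb2N ha]
      group
    -- b a b⁻¹ = c * a, and b c b⁻¹ = c (both in M)
    have key2 : b * a * b⁻¹ = c * a := by rw [hc]; group
    have key3 : b * c = c * b := habelM _ _ hbM hcM
    have key4 : (b * b) * a * (b * b)⁻¹ = c * c * a := by
      have : (b * b) * a * (b * b)⁻¹ = b * (b * a * b⁻¹) * b⁻¹ := by group
      rw [this, key2, show b * (c * a) * b⁻¹ = (b * c) * (a * b⁻¹) by group, key3,
        show c * b * (a * b⁻¹) = c * (b * a * b⁻¹) by group, key2]
      group
    have hcc : c * c = 1 := by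
      have : c * c * a = a := by rw [← key4, key1]
      calc c * c = (c * c * a) * a⁻¹ := by group
        _ = a * a⁻¹ := by rw [this]
        _ = 1 := by group
    have hc1 : c = 1 := htf c hcN hcc
    have : b * a * b⁻¹ * a⁻¹ = 1 := hc1
    calc b * a = (b * a * b⁻¹ * a⁻¹) * (a * b) := by group
      _ = a * b := by rw [this, one_mul]
  -- every x ∉ N is of the form b * n
  have hdecomp : ∀ x : G, x ∉ N → b⁻¹ * x ∈ N := by
    intro x hx
    rw [Subgroup.mul_mem_iff_of_index_two hidx]
    simp [hx, hbN]
  -- b commutes with everything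
  have hbc : ∀ x : G, b * x = x * b := by
    intro x
    by_cases hx : x ∈ N
    · exact hbN' x hx
    · have hn := hdecomp x hx
      have hx' : x = b * (b⁻¹ * x) := by group
      rw [hx']
      calc b * (b * (b⁻¹ * x)) = b * (b * (b⁻¹ * x)) := rfl
        _ = b * ((b⁻¹ * x) * b) := by rw [hbN' _ hn]
        _ = (b * (b⁻¹ * x)) * b := by group
  -- elements of N commute with everything
  have hNc : ∀ a ∈ N, ∀ x : G, a * x = x * a := by
    intro a ha x
    by_cases hx : x ∈ N
    · exact habel a x ha hx
    · have hn := hdecomp x hx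
      have hx' : x = b * (b⁻¹ * x) := by group
      rw [hx']
      calc a * (b * (b⁻¹ * x)) = (a * b) * (b⁻¹ * x) := by group
        _ = (b * a) * (b⁻¹ * x) := by rw [hbN' a ha]
        _ = b * (a * (b⁻¹ * x)) := by group
        _ = b * ((b⁻¹ * x) * a) := by rw [habel a _ ha hn]
        _ = (b * (b⁻¹ * x)) * a := by group
  -- G is abelian: contradiction
  apply hG
  intro x y
  by_cases hx : x ∈ N
  · exact hNc x hx y
  · have hn := hdecomp x hx
    have hx' : x = b * (b⁻¹ * x) := by group
    rw [hx']
    calc b * (b⁻¹ * x) * y = b * ((b⁻¹ * x) * y) := by group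
      _ = b * (y * (b⁻¹ * x)) := by rw [hNc _ hn y]
      _ = (b * y) * (b⁻¹ * x) := by group
      _ = (y * b) * (b⁻¹ * x) := by rw [hbc y]
      _ = y * (b * (b⁻¹ * x)) := by group
end

section
/- Let G be a group and N a subgroup of G of index 2 that is isomorphic (as a group) to the free abelian group ℤ^d. If g ∈ N and g^r lies in the center Z(G) of G for some integer r ≥ 1, then g lies in Z(G). -/
/-- Let `N` be an index-2 subgroup of a group `G` isomorphic to the free abelian
group `ℤ^d`. If `g ∈ N` and `g^r` lies in the center of `G` for some `r ≥ 1`,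
then `g` lies in the center of `G`. -/
theorem mem_center_of_pow_mem_center
    {G : Type*} [Group G] (d : ℕ) (N : Subgroup G) (hidx : N.index = 2)
    (hiso : Nonempty (N ≃* Multiplicative (Fin d → ℤ)))
    (g : G) (hg : g ∈ N) (r : ℕ) (hr : 1 ≤ r)
    (hpow : g ^ r ∈ Subgroup.center G) :
    g ∈ Subgroup.center G := by
  obtain ⟨φ⟩ := hiso
  have hnormal : ∀ x : G, x * g * x⁻¹ ∈ N := fun x => by
    rw [Subgroup.mul_mem_iff_of_index_two hidx, Subgroup.mul_mem_iff_of_index_two hidx,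
      inv_mem_iff]
    simp [hg]
  have comm : ∀ a b : N, a * b = b * a := fun a b =>
    φ.injective (by simp [map_mul, mul_comm])
  have tf : ∀ a : N, a ^ r = 1 → a = 1 := by
    intro a ha
    apply φ.injective
    have h1 : φ a ^ r = 1 := by rw [← map_pow, ha, map_one]
    have h2 : r • Multiplicative.toAdd (φ a) = 0 := by
      have := congrArg Multiplicative.toAdd h1
      simpa using this
    have hr0 : (r : ℤ) ≠ 0 := by exact_mod_cast Nat.one_le_iff_ne_zero.mp hr
    have h3 : Multiplicative.toAdd (φ a) = 0 := by
      funext i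
      have := congrFun h2 i
      simp only [Pi.smul_apply, nsmul_eq_mul, Pi.zero_apply] at this
      exact (mul_eq_zero.mp this).resolve_left hr0
    simp only [map_one]
    have : φ a = Multiplicative.ofAdd 0 := by
      rw [← h3]; rfl
    simpa using this
  rw [Subgroup.mem_center_iff]
  intro x
  have hh : x * g * x⁻¹ ∈ N := hnormal x
  set a : N := ⟨x * g * x⁻¹, hh⟩ with ha
  set b : N := ⟨g, hg⟩ with hb
  have hpowa : a ^ r = b ^ r := by
    apply Subtype.ext
    push_cast [ha, hb]
    rw [conj_pow]
    have := (Subgroup.mem_center_iff.mp hpow) x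
    calc x * g ^ r * x⁻¹ = g ^ r * x * x⁻¹ := by rw [← this]
      _ = g ^ r := by group
  have hab : a * b⁻¹ = 1 := by
    apply tf
    have hc : Commute a b⁻¹ := comm a b⁻¹
    rw [hc.mul_pow, hpowa, inv_pow, mul_inv_cancel]
  have : a = b := by
    have := mul_eq_one_iff_eq_inv.mp hab
    simpa using this
  have h4 : x * g * x⁻¹ = g := congrArg Subtype.val this
  calc x * g = x * g * x⁻¹ * x := by group
    _ = g * x := by rw [h4]
end

section
/- Let G be a group with identity e, let S be a finite subset of G, and let z : S → ℂ be such that z_h ≠ 0 for every h ∈ S. Suppose the scalar unitarity conditions hold: for every g ∈ G, the sum over all ordered pairs (h, h') ∈ S × S with h·h'⁻¹ = g of z_h · conj(z_{h'}) equals 1 if g = e and equals 0 otherwise. Then for every ordered pair (h₁, h₂) ∈ S × S with h₁ ≠ h₂ there exists an ordered pair (h₃, h₄) ∈ S × S with (h₃, h₄) ≠ (h₁, h₂) and h₃·h₄⁻¹ = h₁·h₂⁻¹ (the quadrangularity condition). -/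
/-- Quadrangularity condition: if the transition scalars `z_h ≠ 0` (`h ∈ S`)
of a scalar quantum walk satisfy the scalar unitarity conditions, then for every
pair `(h₁, h₂) ∈ S × S` with `h₁ ≠ h₂` there is a different pair `(h₃, h₄)` with
`h₃·h₄⁻¹ = h₁·h₂⁻¹`. -/
theorem quadrangularity_of_scalar_unitarity
    {G : Type*} [Group G] [DecidableEq G]
    (S : Finset G) (z : G → ℂ) (hz : ∀ h ∈ S, z h ≠ 0)
    (hunit : ∀ g : G,
      (∑ p ∈ S ×ˢ S,
        if p.1 * p.2⁻¹ = g then z p.1 * (starRingEnd ℂ) (z p.2) else 0) =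
        if g = 1 then 1 else 0) :
    ∀ h₁ ∈ S, ∀ h₂ ∈ S, h₁ ≠ h₂ →
      ∃ h₃ ∈ S, ∃ h₄ ∈ S, (h₃, h₄) ≠ (h₁, h₂) ∧ h₃ * h₄⁻¹ = h₁ * h₂⁻¹ := by
  intro h₁ h1S h₂ h2S hne
  by_contra hcon
  push_neg at hcon
  have hg : h₁ * h₂⁻¹ ≠ 1 := by
    intro h
    exact hne (mul_inv_eq_one.mp h)
  have key := hunit (h₁ * h₂⁻¹)
  rw [if_neg hg] at key
  have hsum : (∑ p ∈ S ×ˢ S,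
      if p.1 * p.2⁻¹ = h₁ * h₂⁻¹ then z p.1 * (starRingEnd ℂ) (z p.2) else 0)
      = z h₁ * (starRingEnd ℂ) (z h₂) := by
    rw [Finset.sum_eq_single (h₁, h₂)]
    · simp
    · rintro ⟨a, b⟩ hab hneq
      simp only [Finset.mem_product] at hab
      exact if_neg (hcon a hab.1 b hab.2 hneq)
    · intro h
      exact absurd (Finset.mem_product.mpr ⟨h1S, h2S⟩) h
  rw [hsum] at key
  exact (mul_ne_zero (hz _ h1S) (by simpa using hz _ h2S)) key
end

section
/- Let G be a group with a subgroup N of index 2 and a group isomorphism θ : N → ℤ × ℤ, and suppose that for every g ∈ G with g ∉ N, conjugation by g acts on N as the coordinate swap: θ(g·n·g⁻¹) = (b, a) whenever θ(n) = (a, b). Then there exists c ∈ G with c ∉ N and c² = e; that is, the extension splits and G is isomorphic to the semidirect product ℤ² ⋊ ℤ₂ with the swap action. -/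
/-- The swap automorphism `(a, b) ↦ (b, a)` of `ℤ × ℤ` (multiplicatively). -/
def swapAutZ2 : MulAut (Multiplicative (ℤ × ℤ)) :=
  AddEquiv.toMultiplicative (AddEquiv.prodComm : ℤ × ℤ ≃+ ℤ × ℤ)

/-- The action of `ℤ₂` on `ℤ × ℤ` by the coordinate swap. -/
def swapActionZ2 : Multiplicative (ZMod 2) →* MulAut (Multiplicative (ℤ × ℤ)) :=
  MonoidHom.mk' (fun x => swapAutZ2 ^ (Multiplicative.toAdd x).val) (by
    have h2 : swapAutZ2 ^ 2 = 1 := by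
      rw [sq]
      ext x <;> rfl
    intro a b
    show swapAutZ2 ^ (Multiplicative.toAdd (a * b)).val = _
    have hab : Multiplicative.toAdd (a * b) =
        Multiplicative.toAdd a + Multiplicative.toAdd b := rfl
    rw [hab, ZMod.val_add, ← pow_eq_pow_mod _ h2, pow_add])

/-!
Take `g ∉ N`. Conjugation by `g` fixes `g² ∈ N`, so `θ(g²) = (k, k)` lies on the diagonal. Since
`(g n)² = g² · (g⁻¹ n g) · n` and `g⁻¹ ∉ N` also acts by the swap, `n = θ⁻¹(-k, 0)` gives
`θ((g n)²) = (k, k) + (0, -k) + (-k, 0) = 0`, so `c = g n` is an involution outside `N`. Every element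
of `G` is then uniquely `n cᵗ` with `n ∈ N`, `t ∈ ℤ/2`, and `n cᵗ ↦ (θ n, t)` is the isomorphism.
-/

open Multiplicative

theorem Subgroup.exists_notMem_of_index_eq_two {G : Type*} [Group G] {N : Subgroup G}
    (hidx : N.index = 2) : ∃ g, g ∉ N :=
  (Subgroup.index_eq_two_iff_exists_notMem_and.1 hidx).imp fun _ h => h.1

theorem Multiplicative.zmod_two_eq_one_or_eq_ofAdd_one (t : Multiplicative (ZMod 2)) :
    t = 1 ∨ t = ofAdd 1 := by
  fin_cases t <;> [left; right] <;> rfl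

theorem Multiplicative.zmod_two_eq_of_eq_one_iff {s t : Multiplicative (ZMod 2)}
    (h : s = 1 ↔ t = 1) : s = t := by
  revert s t; decide

theorem swapActionZ2_ofAdd_one : swapActionZ2 (ofAdd 1) = swapAutZ2 := by
  simp [swapActionZ2, ZMod.val_one]

theorem exists_mul_swapAutZ2_mul_eq_one {m : Multiplicative (ℤ × ℤ)} (hm : swapAutZ2 m = m) :
    ∃ x, m * swapAutZ2 x * x = 1 := by
  have hdiag : (toAdd m).1 = (toAdd m).2 := congrArg (fun z => (toAdd z).2) hm
  refine ⟨ofAdd (-(toAdd m).1, 0), toAdd.injective ?_⟩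
  ext <;> simp [swapAutZ2, hdiag]

section IndexTwo

variable {G : Type*} [Group G] {N : Subgroup G} {c : G}

def zmodTwoPowHom (c : G) (hc : c ^ 2 = 1) : Multiplicative (ZMod 2) →* G :=
  MonoidHom.mk' (fun t => c ^ (toAdd t).val) fun s t => by
    rw [toAdd_mul, ZMod.val_add, ← pow_eq_pow_mod _ hc, pow_add]

theorem zmodTwoPowHom_ofAdd_one (hc : c ^ 2 = 1) : zmodTwoPowHom c hc (ofAdd 1) = c := by
  simp [zmodTwoPowHom, ZMod.val_one]

theorem Subgroup.mul_pow_val_mem_iff (hcN : c ∉ N) (n : N)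
    (t : Multiplicative (ZMod 2)) : (n : G) * c ^ (toAdd t).val ∈ N ↔ t = 1 := by
  rcases t.zmod_two_eq_one_or_eq_ofAdd_one with rfl | rfl
  · simp
  · simpa [N.mul_mem_cancel_left n.2, ZMod.val_one] using hcN

theorem Subgroup.bijective_mul_pow_val (hidx : N.index = 2) (hcN : c ∉ N) :
    Function.Bijective fun p : N × Multiplicative (ZMod 2) => (p.1 : G) * c ^ (toAdd p.2).val := by
  constructor
  · rintro ⟨n₁, t₁⟩ ⟨n₂, t₂⟩ h
    have ht : t₁ = t₂ := zmod_two_eq_of_eq_one_iff <|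
      (N.mul_pow_val_mem_iff hcN n₁ t₁).symm.trans
        ((congrArg (· ∈ N) h).to_iff.trans (N.mul_pow_val_mem_iff hcN n₂ t₂))
    subst ht
    exact Prod.ext (Subtype.ext (mul_right_cancel h)) rfl
  · intro g
    by_cases hg : g ∈ N
    · exact ⟨(⟨g, hg⟩, 1), by simp⟩
    · have hgc : g * c⁻¹ ∈ N := by simp [Subgroup.mul_mem_iff_of_index_two hidx, hg, hcN]
      exact ⟨(⟨g * c⁻¹, hgc⟩, ofAdd 1), by simp [ZMod.val_one]⟩

theorem nonempty_mulEquiv_semidirectProduct_of_index_eq_two {A : Type*} [Group A]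
    (hidx : N.index = 2) (hcN : c ∉ N) (hc : c ^ 2 = 1) (θ : N ≃* A)
    (φ : Multiplicative (ZMod 2) →* MulAut A)
    (hφ : ∀ a, (θ.symm (φ (ofAdd 1) a) : G) = c * θ.symm a * c⁻¹) :
    Nonempty (G ≃* A ⋊[φ] Multiplicative (ZMod 2)) := by
  let ι : A →* G := N.subtype.comp θ.symm.toMonoidHom
  have hcompat : ∀ t, ι.comp (φ t).toMonoidHom =
      (MulAut.conj (zmodTwoPowHom c hc t)).toMonoidHom.comp ι := by
    intro t
    rcases t.zmod_two_eq_one_or_eq_ofAdd_one with rfl | rfl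
    · ext; simp
    · ext a; simp [ι, zmodTwoPowHom_ofAdd_one, hφ]
  let Φ := SemidirectProduct.lift ι (zmodTwoPowHom c hc) hcompat
  have hΦ : ⇑Φ = (fun p : N × Multiplicative (ZMod 2) => (p.1 : G) * c ^ (toAdd p.2).val) ∘
      (SemidirectProduct.equivProd.trans (θ.symm.toEquiv.prodCongr (Equiv.refl _))) := rfl
  have hbij : Function.Bijective Φ :=
    hΦ ▸ (N.bijective_mul_pow_val hidx hcN).comp (Equiv.bijective _)
  exact ⟨(MulEquiv.ofBijective Φ hbij).symm⟩

theorem coe_symm_swapAutZ2_eq_conj (hidx : N.index = 2) (θ : N ≃* Multiplicative (ℤ × ℤ))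
    (hconj : ∀ g : G, g ∉ N → ∀ (n : N) (h : g * (n : G) * g⁻¹ ∈ N),
      toAdd (θ ⟨g * (n : G) * g⁻¹, h⟩) = ((toAdd (θ n)).2, (toAdd (θ n)).1))
    {g : G} (hg : g ∉ N) (a : Multiplicative (ℤ × ℤ)) :
    (θ.symm (swapAutZ2 a) : G) = g * θ.symm a * g⁻¹ := by
  have hmem : g * (θ.symm a : G) * g⁻¹ ∈ N :=
    (Subgroup.normal_of_index_eq_two hidx).conj_mem _ (θ.symm a).2 g
  have h : θ ⟨_, hmem⟩ = swapAutZ2 a := toAdd.injective <| by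
    rw [hconj g hg _ hmem, MulEquiv.apply_symm_apply]
    rfl
  rw [← h, MulEquiv.symm_apply_apply]

theorem exists_notMem_sq_eq_one_of_swap (hidx : N.index = 2) (θ : N ≃* Multiplicative (ℤ × ℤ))
    (hswap : ∀ g ∉ N, ∀ a, (θ.symm (swapAutZ2 a) : G) = g * θ.symm a * g⁻¹) :
    ∃ c ∉ N, c ^ 2 = 1 := by
  obtain ⟨g, hg⟩ := N.exists_notMem_of_index_eq_two hidx
  set m := θ ⟨g ^ 2, N.sq_mem_of_index_two hidx g⟩
  have hm : swapAutZ2 m = m := by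
    refine θ.symm.injective (Subtype.ext ?_)
    rw [hswap g hg, MulEquiv.symm_apply_apply]
    group
  obtain ⟨x, hx⟩ := exists_mul_swapAutZ2_mul_eq_one hm
  refine ⟨g * θ.symm x, fun h => hg ((N.mul_mem_cancel_right (θ.symm x).2).1 h), ?_⟩
  calc (g * θ.symm x) ^ 2
      = g ^ 2 * (g⁻¹ * θ.symm x * g⁻¹⁻¹) * θ.symm x := by
        simp only [sq, inv_inv, mul_assoc, mul_inv_cancel_left]
    _ = (θ.symm (m * swapAutZ2 x * x) : G) := by
      rw [← hswap g⁻¹ (inv_mem_iff.not.2 hg), map_mul, map_mul]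
      simp [m]
    _ = 1 := by rw [hx, map_one, OneMemClass.coe_one]

end IndexTwo

/-- Let `N` be an index-2 subgroup of `G` with an isomorphism `θ : N ≃ ℤ × ℤ`, and
suppose conjugation by every element outside `N` acts on `N` as the coordinate swap.
Then there is `c ∉ N` with `c² = e`: the extension splits, and `G` is isomorphic to
the semidirect product `ℤ² ⋊ ℤ₂` with the swap action. -/
theorem index_two_swap_action_splits
    {G : Type*} [Group G] (N : Subgroup G) (hidx : N.index = 2)
    (θ : N ≃* Multiplicative (ℤ × ℤ))
    (hconj : ∀ g : G, g ∉ N → ∀ (n : N) (h : g * (n : G) * g⁻¹ ∈ N),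
      Multiplicative.toAdd (θ ⟨g * (n : G) * g⁻¹, h⟩) =
        ((Multiplicative.toAdd (θ n)).2, (Multiplicative.toAdd (θ n)).1)) :
    (∃ c : G, c ∉ N ∧ c ^ 2 = 1) ∧
      Nonempty (G ≃* (Multiplicative (ℤ × ℤ) ⋊[swapActionZ2] Multiplicative (ZMod 2))) := by
  have hswap := fun g (hg : g ∉ N) => coe_symm_swapAutZ2_eq_conj hidx θ hconj hg
  obtain ⟨c, hcN, hc⟩ := exists_notMem_sq_eq_one_of_swap hidx θ hswap
  refine ⟨⟨c, hcN, hc⟩, nonempty_mulEquiv_semidirectProduct_of_index_eq_two hidx hcN hc θ _ ?_⟩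
  simpa only [swapActionZ2_ofAdd_one] using hswap c hcN
end

section
/- Let G be a group with a subgroup N of index 2 and a group isomorphism θ : N → ℤ × ℤ, and suppose there exists c ∈ G with c ∉ N such that θ(c·n·c⁻¹) = (a, −b) whenever θ(n) = (a, b), and θ(c²) = (1, 0). Then every element g ∈ G with g ∉ N has infinite order. In particular G contains no subgroup of order 2 meeting the nontrivial coset, so G is not a semidirect product of N by ℤ/2ℤ. -/
/-!
Write `g ∉ N` as `g = c n` with `n ∈ N`. Then `g² = c² (c⁻¹ n c) n`, and since conjugation by `c`
fixes the first coordinate of `θ`, that coordinate of `θ(g²)` is `1 + 2 a` for some integer `a`: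
odd, hence nonzero. So `g²` is a nontrivial element of the torsion-free group `ℤ²`, and `g` has
infinite order.
-/

namespace Subgroup

variable {G : Type*} [Group G] {N : Subgroup G}

theorem inv_mul_mem_of_index_two (hidx : N.index = 2) {a b : G} (ha : a ∉ N) (hb : b ∉ N) :
    a⁻¹ * b ∈ N := by
  rw [mul_mem_iff_of_index_two hidx, inv_mem_iff]
  exact iff_of_false ha hb

theorem not_isOfFinOrder_of_map_pow_ne_one {M : Type*} [Group M] [IsMulTorsionFree M]
    (f : N →* M) {g : G} {k : ℕ} (hk : g ^ k ∈ N) (hf : f ⟨g ^ k, hk⟩ ≠ 1) :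
    ¬ IsOfFinOrder g := fun hg =>
  hf (f.isOfFinOrder (Submonoid.isOfFinOrder_coe.1 (hg.pow (n := k)))).eq_one'

theorem odd_map_sq_of_notMem_of_index_two (hidx : N.index = 2) (f : N →* Multiplicative ℤ)
    {c : G} (hc : c ∉ N)
    (hf : ∀ (n : N) (h : c * n * c⁻¹ ∈ N), f ⟨c * n * c⁻¹, h⟩ = f n)
    (hc2 : Odd (Multiplicative.toAdd (f ⟨c ^ 2, sq_mem_of_index_two hidx c⟩)))
    {g : G} (hg : g ∉ N) :
    Odd (Multiplicative.toAdd (f ⟨g ^ 2, sq_mem_of_index_two hidx g⟩)) := by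
  set n : N := ⟨c⁻¹ * g, inv_mul_mem_of_index_two hidx hc hg⟩
  set m : N := ⟨c⁻¹ * n * c, by simpa using (normal_of_index_eq_two hidx).conj_mem _ n.2 c⁻¹⟩
  have hm : f m = f n := by
    have hconj : c * m * c⁻¹ = n := by simp only [m, n]; group
    simpa only [hconj] using (hf m (hconj ▸ n.2)).symm
  have hsq : (⟨g ^ 2, sq_mem_of_index_two hidx g⟩ : N) =
      ⟨c ^ 2, sq_mem_of_index_two hidx c⟩ * m * n :=
    Subtype.ext <| by simp only [coe_mul, m, n, pow_two]; group
  rw [hsq, f.map_mul, f.map_mul, hm, toAdd_mul, toAdd_mul, add_assoc]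
  exact hc2.add_even ⟨_, rfl⟩

end Subgroup

/-- The non-split extension `J₄` of `ℤ₂` by `ℤ²`: let `N` be an index-2 subgroup of
`G` with `θ : N ≃ ℤ × ℤ`, and suppose there is `c ∉ N` whose conjugation acts on `N`
as `(a, b) ↦ (a, −b)` and with `θ(c²) = (1, 0)`. Then every `g ∉ N` has infinite
order; in particular `G` has no subgroup of order 2 meeting the nontrivial coset,
so the extension does not split. -/
theorem klein_bottle_extension_no_split
    {G : Type*} [Group G] (N : Subgroup G) (hidx : N.index = 2)
    (θ : N ≃* Multiplicative (ℤ × ℤ)) (c : G) (hc : c ∉ N)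
    (hconj : ∀ (n : N) (h : c * (n : G) * c⁻¹ ∈ N),
      Multiplicative.toAdd (θ ⟨c * (n : G) * c⁻¹, h⟩) =
        ((Multiplicative.toAdd (θ n)).1, -(Multiplicative.toAdd (θ n)).2))
    (hc2 : ∀ h : c ^ 2 ∈ N, Multiplicative.toAdd (θ ⟨c ^ 2, h⟩) = (1, 0)) :
    (∀ g : G, g ∉ N → ¬ IsOfFinOrder g) ∧
      ¬ ∃ H : Subgroup G, Nat.card H = 2 ∧ ∃ g ∈ H, g ∉ N := by
  let f : N →* Multiplicative ℤ := (AddMonoidHom.fst ℤ ℤ).toMultiplicative.comp θ.toMonoidHom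
  have hf (n : N) (h : c * n * c⁻¹ ∈ N) : f ⟨c * n * c⁻¹, h⟩ = f n := by
    simpa [f] using congrArg Prod.fst (hconj n h)
  have hfc2 : Odd (Multiplicative.toAdd (f ⟨c ^ 2, N.sq_mem_of_index_two hidx c⟩)) := by
    simp [f, hc2]
  have infinite_order (g : G) (hg : g ∉ N) : ¬ IsOfFinOrder g := by
    refine N.not_isOfFinOrder_of_map_pow_ne_one f (N.sq_mem_of_index_two hidx g) fun h => ?_
    simpa [h] using N.odd_map_sq_of_notMem_of_index_two hidx f hc hf hfc2 hg
  refine ⟨infinite_order, ?_⟩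
  rintro ⟨H, hH, g, hgH, hgN⟩
  have : Finite H := Nat.finite_of_card_ne_zero (by omega)
  exact infinite_order g hgN (H.subtype.isOfFinOrder (isOfFinOrder_of_finite (⟨g, hgH⟩ : H)))
end

section
/- Let A and B be nonzero 2×2 complex matrices satisfying A·Bᴴ = 0 and Bᴴ·A = 0, where ᴴ denotes the conjugate transpose. Then there exist a unitary 2×2 matrix V, an orthonormal pair of vectors u, v ∈ ℂ² (i.e., ⟨u,u⟩ = ⟨v,v⟩ = 1 and ⟨u,v⟩ = 0), and real numbers α > 0, β > 0, such that A = α · V · (u uᴴ) and B = β · V · (v vᴴ), where u uᴴ denotes the rank-one matrix (outer product) with entries u_i · conj(u_j). -/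
/-!
If `Bᴴ ≠ 0` then `A Bᴴ = 0` forces `rank A ≤ 1` in dimension two, and likewise `rank B ≤ 1`,
so `A = α p uᴴ` and `B = β q vᴴ` with unit vectors `p, u, q, v` and `α, β > 0`. The two
conditions then say exactly `uᴴ v = 0` and `qᴴ p = 0`, and `V = p uᴴ + q vᴴ`, which carries the
orthonormal basis `u, v` to the orthonormal basis `p, q`, is unitary with `V u uᴴ = p uᴴ` and
`V v vᴴ = q vᴴ`.
-/

open Matrix

namespace Matrix

section Rank

variable {K : Type*} [Field K] {l m n : Type*} [Fintype m] [Fintype n]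

theorem rank_pos_of_ne_zero {A : Matrix l n K} (hA : A ≠ 0) : 0 < A.rank := by
  classical
  rw [Nat.pos_iff_ne_zero, rank, Ne, Submodule.finrank_eq_zero, LinearMap.range_eq_bot]
  contrapose! hA
  ext i j
  simpa using congrFun (LinearMap.congr_fun hA (Pi.single j 1)) i

theorem rank_left_lt_card_of_mul_eq_zero [Finite l] {A : Matrix l m K} {B : Matrix m n K}
    (hAB : A * B = 0) (hB : B ≠ 0) : A.rank < Fintype.card m := by
  have := rank_add_rank_le_card_of_mul_eq_zero hAB
  have := rank_pos_of_ne_zero hB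
  omega

theorem rank_right_lt_card_of_mul_eq_zero [Finite l] {A : Matrix l m K} {B : Matrix m n K}
    (hAB : A * B = 0) (hA : A ≠ 0) : B.rank < Fintype.card m := by
  have := rank_add_rank_le_card_of_mul_eq_zero hAB
  have := rank_pos_of_ne_zero hA
  omega

theorem exists_eq_vecMulVec_of_rank_le_one {A : Matrix m n K} (h : A.rank ≤ 1) :
    ∃ x y, A = vecMulVec x y := by
  rw [rank_eq_finrank_span_cols, finrank_le_one_iff] at h
  obtain ⟨x, hx⟩ := h
  choose y hy using fun j => hx ⟨A.col j, Submodule.subset_span (Set.mem_range_self j)⟩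
  refine ⟨x, y, ext fun i j => ?_⟩
  have := congrFun (congrArg Subtype.val (hy j)) i
  simp only [SetLike.val_smul, Pi.smul_apply, smul_eq_mul, col_apply] at this
  rw [vecMulVec_apply, ← this, mul_comm]

theorem dotProduct_eq_zero_of_vecMulVec_mul_vecMulVec_eq_zero {x z : m → K} {y w : n → K}
    (hx : x ≠ 0) (hz : z ≠ 0) (h : vecMulVec x y * vecMulVec w z = 0) : y ⬝ᵥ w = 0 := by
  simpa [vecMulVec_mul_vecMulVec, hx, hz] using h

end Rank

section Normalization

variable {𝕜 : Type*} [RCLike 𝕜] {m n : Type*} [Fintype m] [Fintype n]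

theorem exists_pos_smul_of_ne_zero {x : n → 𝕜} (hx : x ≠ 0) :
    ∃ (r : ℝ) (p : n → 𝕜), 0 < r ∧ star p ⬝ᵥ p = 1 ∧ x = (r : 𝕜) • p := by
  set r := ‖WithLp.toLp 2 x‖
  have hr : 0 < r := norm_pos_iff.mpr (by simpa using hx)
  have hr' : (r : 𝕜) ≠ 0 := RCLike.ofReal_ne_zero.mpr hr.ne'
  have hxx : star x ⬝ᵥ x = (r : 𝕜) ^ 2 := by
    rw [dotProduct_comm, ← EuclideanSpace.inner_toLp_toLp, inner_self_eq_norm_sq_to_K]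
  refine ⟨r, (r : 𝕜)⁻¹ • x, hr, ?_, by rw [smul_inv_smul₀ hr']⟩
  rw [star_smul, smul_dotProduct, dotProduct_smul, hxx, star_inv₀, RCLike.star_def,
    RCLike.conj_ofReal, smul_eq_mul, smul_eq_mul]
  field_simp

theorem exists_pos_smul_vecMulVec_star_of_rank_le_one {A : Matrix m n 𝕜} (hA : A ≠ 0)
    (h : A.rank ≤ 1) :
    ∃ (α : ℝ) (p : m → 𝕜) (u : n → 𝕜), 0 < α ∧ star p ⬝ᵥ p = 1 ∧ star u ⬝ᵥ u = 1 ∧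
      A = (α : 𝕜) • vecMulVec p (star u) := by
  obtain ⟨x, y, rfl⟩ := exists_eq_vecMulVec_of_rank_le_one h
  have hx : x ≠ 0 := by rintro rfl; simp at hA
  have hy : star y ≠ 0 := by
    rintro hy
    simp [← ext_iff, vecMulVec_apply, star_eq_zero.mp hy] at hA
  obtain ⟨r, p, hr, hp, rfl⟩ := exists_pos_smul_of_ne_zero hx
  obtain ⟨s, u, hs, hu, hyu⟩ := exists_pos_smul_of_ne_zero hy
  refine ⟨r * s, p, u, mul_pos hr hs, hp, hu, ?_⟩
  rw [← star_star y, hyu, star_smul, RCLike.star_def, RCLike.conj_ofReal, smul_vecMulVec,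
    vecMulVec_smul, smul_smul, RCLike.ofReal_mul]

end Normalization

section Completeness

variable {R : Type*} [CommRing R] [StarRing R] {m n : Type*} [Fintype n]

theorem sum_vecMulVec_star_self_eq_one [DecidableEq n] (b : n → n → R)
    (hb : ∀ i j, star (b i) ⬝ᵥ b j = if i = j then 1 else 0) :
    ∑ i, vecMulVec (b i) (star (b i)) = 1 := by
  -- `U` has the columns `b i`, and a one-sided inverse of a square matrix is two-sided.
  set U : Matrix n n R := (of b)ᵀ
  have hU : Uᴴ * U = 1 := by
    ext i j
    simpa [U, mul_apply, dotProduct, one_apply] using hb i j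
  rw [← mul_eq_one_comm.mp hU]
  ext i j
  simp [U, mul_apply, vecMulVec_apply, Matrix.sum_apply]

theorem vecMulVec_star_self_add_vecMulVec_star_self_eq_one {u v : Fin 2 → R}
    (hu : star u ⬝ᵥ u = 1) (hv : star v ⬝ᵥ v = 1) (huv : star u ⬝ᵥ v = 0) :
    vecMulVec u (star u) + vecMulVec v (star v) = 1 := by
  have hvu : star v ⬝ᵥ u = 0 := by rw [star_dotProduct, huv, star_zero]
  have := sum_vecMulVec_star_self_eq_one ![u, v] (by
    intro i j; fin_cases i <;> fin_cases j <;> simp [hu, hv, huv, hvu])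
  simpa [Fin.sum_univ_two] using this

variable {p q : m → R} {u v : n → R}

theorem vecMulVec_add_vecMulVec_mul_vecMulVec_left {l : Type*} (w : l → R)
    (hu : star u ⬝ᵥ u = 1) (hvu : star v ⬝ᵥ u = 0) :
    (vecMulVec p (star u) + vecMulVec q (star v)) * vecMulVec u w = vecMulVec p w := by
  rw [Matrix.add_mul, vecMulVec_mul_vecMulVec, vecMulVec_mul_vecMulVec, hu, hvu, one_smul,
    zero_smul, add_eq_left]
  exact ext fun _ _ => mul_zero _

theorem vecMulVec_add_vecMulVec_mul_vecMulVec_right {l : Type*} (w : l → R)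
    (hv : star v ⬝ᵥ v = 1) (huv : star u ⬝ᵥ v = 0) :
    (vecMulVec p (star u) + vecMulVec q (star v)) * vecMulVec v w = vecMulVec q w := by
  rw [add_comm, vecMulVec_add_vecMulVec_mul_vecMulVec_left w hv huv]

theorem vecMulVec_add_vecMulVec_mul_conjTranspose_self {p q : Fin 2 → R}
    (hu : star u ⬝ᵥ u = 1) (hv : star v ⬝ᵥ v = 1) (huv : star u ⬝ᵥ v = 0)
    (hp : star p ⬝ᵥ p = 1) (hq : star q ⬝ᵥ q = 1) (hpq : star p ⬝ᵥ q = 0) :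
    (vecMulVec p (star u) + vecMulVec q (star v)) *
      (vecMulVec p (star u) + vecMulVec q (star v))ᴴ = 1 := by
  have hvu : star v ⬝ᵥ u = 0 := by rw [star_dotProduct, huv, star_zero]
  rw [conjTranspose_add, conjTranspose_vecMulVec, conjTranspose_vecMulVec, star_star, star_star,
    Matrix.mul_add, vecMulVec_add_vecMulVec_mul_vecMulVec_left _ hu hvu,
    vecMulVec_add_vecMulVec_mul_vecMulVec_right _ hv huv,
    vecMulVec_star_self_add_vecMulVec_star_self_eq_one hp hq hpq]

end Completeness

end Matrix

/-- Canonical rank-one form: if `A, B` are nonzero `2×2` complex matrices with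
`A·Bᴴ = 0` and `Bᴴ·A = 0`, then there are a unitary `V`, an orthonormal pair
`u, v ∈ ℂ²` and reals `α, β > 0` with `A = α·V·(u uᴴ)` and `B = β·V·(v vᴴ)`. -/
theorem rank_one_form_of_unitarity_conditions
    (A B : Matrix (Fin 2) (Fin 2) ℂ) (hA : A ≠ 0) (hB : B ≠ 0)
    (h1 : A * Bᴴ = 0) (h2 : Bᴴ * A = 0) :
    ∃ (V : Matrix (Fin 2) (Fin 2) ℂ) (u v : Fin 2 → ℂ) (α β : ℝ),
      V * Vᴴ = 1 ∧ Vᴴ * V = 1 ∧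
      (∑ i, (starRingEnd ℂ) (u i) * u i) = 1 ∧
      (∑ i, (starRingEnd ℂ) (v i) * v i) = 1 ∧
      (∑ i, (starRingEnd ℂ) (u i) * v i) = 0 ∧
      0 < α ∧ 0 < β ∧
      A = (α : ℂ) • (V * vecMulVec u (star u)) ∧
      B = (β : ℂ) • (V * vecMulVec v (star v)) := by
  have unit_ne_zero {x : Fin 2 → ℂ} (hx : star x ⬝ᵥ x = 1) : star x ≠ 0 := by
    rintro h0; simp [star_eq_zero.mp h0] at hx
  have hBH : Bᴴ ≠ 0 := by simpa using hB
  have hrankA : A.rank ≤ 1 := by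
    simpa [Nat.lt_succ_iff] using rank_left_lt_card_of_mul_eq_zero h1 hBH
  have hrankB : B.rank ≤ 1 := by
    open scoped ComplexOrder in
    simpa [rank_conjTranspose, Nat.lt_succ_iff] using rank_right_lt_card_of_mul_eq_zero h1 hA
  obtain ⟨α, p, u, hα, hp, hu, rfl⟩ := exists_pos_smul_vecMulVec_star_of_rank_le_one hA hrankA
  obtain ⟨β, q, v, hβ, hq, hv, rfl⟩ := exists_pos_smul_vecMulVec_star_of_rank_le_one hB hrankB
  have huv : star u ⬝ᵥ v = 0 := by
    refine dotProduct_eq_zero_of_vecMulVec_mul_vecMulVec_eq_zero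
      (star_ne_zero.mp (unit_ne_zero hp)) (unit_ne_zero hq) ?_
    simpa [hα.ne', hβ.ne'] using h1
  have hqp : star q ⬝ᵥ p = 0 := by
    refine dotProduct_eq_zero_of_vecMulVec_mul_vecMulVec_eq_zero
      (star_ne_zero.mp (unit_ne_zero hv)) (unit_ne_zero hu) ?_
    simpa [hα.ne', hβ.ne'] using h2
  have hV := vecMulVec_add_vecMulVec_mul_conjTranspose_self hu hv huv hp hq
    (by rw [star_dotProduct, hqp, star_zero])
  refine ⟨_, u, v, α, β, hV, mul_eq_one_comm.mp hV, hu, hv, huv, hα, hβ, ?_, ?_⟩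
  · rw [vecMulVec_add_vecMulVec_mul_vecMulVec_left _ hu (by rw [star_dotProduct, huv, star_zero])]
    rfl -- `RCLike.ofReal` against `Complex.ofReal`
  · rw [vecMulVec_add_vecMulVec_mul_vecMulVec_right _ hv huv]
    rfl
end

section
/- Let A₊₁, A₋₁, A₊₂, A₋₂ be nonzero 2×2 complex matrices satisfying the simple-square-lattice unitarity conditions: (i) A₊ᵢ·A₋ᵢᴴ = 0 and A₋ᵢᴴ·A₊ᵢ = 0 for i = 1, 2; (ii) for {i, j} = {1, 2}: A₊ᵢ·A₋ⱼᴴ + A₊ⱼ·A₋ᵢᴴ = 0, A₊ᵢ·A₊ⱼᴴ + A₋ⱼ·A₋ᵢᴴ = 0, A₋ᵢᴴ·A₊ⱼ + A₋ⱼᴴ·A₊ᵢ = 0, and A₋ᵢᴴ·A₋ⱼ + A₊ⱼᴴ·A₊ᵢ = 0; (iii) Σ_h A_h·A_hᴴ = I = Σ_h A_hᴴ·A_h, the sums running over h ∈ {+1, −1, +2, −2}; and (iv) A₊₁ + A₋₁ + A₊₂ + A₋₂ = I. Then there exist α ∈ (0, 1) and a unitary 2×2 matrix U such that, writing β = √(1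 − α²), the conjugated matrices U·A_h·Uᴴ are given either by A₊₁ = [[α², 0], [αβ, 0]], A₋₁ = [[0, −αβ], [0, α²]], A₊₂ = [[β², 0], [−αβ, 0]], A₋₂ = [[0, αβ], [0, β²]], or by the same expressions with the values of A₊₂ and A₋₂ exchanged. -/
/-!
Write `J x = (-x̄₁, x̄₀)`, which spans the Hermitian orthogonal complement of `x ∈ ℂ²`.
The conditions `A₊ᵢ A₋ᵢᴴ = 0 = A₋ᵢᴴ A₊ᵢ` force `A₊ᵢ = a bᵀ` to have rank one and
`A₋ᵢ = t (J a)(J b)ᵀ`. The mixed conditions then force `A₊₂, A₋₂` to be `p (J a) bᵀ` and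
`q a (J b)ᵀ`, in one order or the other. Contracting `Σ A_h = 1` and `Σ A_h A_hᴴ = 1` against
the frames `{a, J a}` and `{b, J b}` gives `t = 1`, `q = -p̄` and, normalising `|b| = 1`,
`|a|²(1 + |p|²) = 1`. The unitary with rows `b` and a suitable phase times `J b` then brings
everything into the canonical form with `α = |a|`.
-/

open Matrix ComplexConjugate ComplexOrder

section Field

variable {K : Type*} [Field K]

theorem exists_eq_smul_of_dotProduct_eq_zero {x y : Fin 2 → K} (hx : x ≠ 0)
    (h : x ⬝ᵥ y = 0) : ∃ μ : K, y = μ • ![-x 1, x 0] := by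
  simp only [dotProduct, Fin.sum_univ_two] at h
  by_cases h0 : x 0 = 0
  · have h1 : x 1 ≠ 0 := fun h1 => hx (by ext i; fin_cases i <;> simp [h0, h1])
    refine ⟨-y 0 / x 1, ?_⟩
    ext i; fin_cases i <;> simp <;> field_simp
    linear_combination h
  · refine ⟨y 1 / x 0, ?_⟩
    ext i; fin_cases i <;> simp <;> field_simp
    linear_combination h

theorem exists_vecMulVec_eq_of_det_eq_zero {M : Matrix (Fin 2) (Fin 2) K} (h : M.det = 0) :
    ∃ u r : Fin 2 → K, M = vecMulVec u r := by
  obtain ⟨v, hv, hMv⟩ := exists_mulVec_eq_zero_iff.mpr h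
  have hrow : ∀ i, ∃ μ : K, M i = μ • ![-v 1, v 0] := fun i =>
    exists_eq_smul_of_dotProduct_eq_zero hv (by rw [dotProduct_comm]; exact congrFun hMv i)
  choose μ hμ using hrow
  exact ⟨μ, _, ext fun i j => by rw [hμ i]; rfl⟩

theorem exists_eq_smul_of_vecMulVec_eq {m n : Type*} {x x' : m → K} {y y' : n → K} (hx : x ≠ 0)
    (h : vecMulVec x y = vecMulVec x' y') : ∃ μ : K, y = μ • y' := by
  obtain ⟨i, hi⟩ := Function.ne_iff.mp hx
  refine ⟨x' i / x i, funext fun j => ?_⟩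
  have := congrFun (congrFun h i) j
  simp only [vecMulVec_apply, Pi.zero_apply] at this hi
  simp only [Pi.smul_apply, smul_eq_mul]
  field_simp
  linear_combination this

end Field

section Det

variable {n K : Type*} [Fintype n] [DecidableEq n] [Field K]

theorem det_eq_zero_of_mul_eq_zero_left {M N : Matrix n n K} (h : M * N = 0) (hN : N ≠ 0) :
    M.det = 0 := by
  by_contra hM
  exact hN (((isUnit_iff_isUnit_det M).mpr (isUnit_iff_ne_zero.mpr hM)).mul_right_eq_zero.mp h)

theorem det_eq_zero_of_mul_eq_zero_right {M N : Matrix n n K} (h : M * N = 0) (hM : M ≠ 0) :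
    N.det = 0 := by
  by_contra hN
  exact hM (((isUnit_iff_isUnit_det N).mpr (isUnit_iff_ne_zero.mpr hN)).mul_left_eq_zero.mp h)

end Det

theorem exists_pos_sq_eq_star_dotProduct_self {n : Type*} [Fintype n] {v : n → ℂ} (hv : v ≠ 0) :
    ∃ r : ℝ, 0 < r ∧ star v ⬝ᵥ v = (r : ℂ) ^ 2 := by
  obtain ⟨x, hx, hxv⟩ := RCLike.pos_iff_exists_ofReal.mp (dotProduct_star_self_pos_iff.mpr hv)
  refine ⟨√x, Real.sqrt_pos.mpr hx, ?_⟩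
  rw [← hxv, ← Complex.ofReal_pow, Real.sq_sqrt hx.le]
  rfl

theorem exists_eq_norm_mul_unit {p : ℂ} (hp : p ≠ 0) : ∃ ζ : ℂ, conj ζ * ζ = 1 ∧ p = ‖p‖ * ζ := by
  have hn : (‖p‖ : ℂ) ≠ 0 := by simpa using hp
  refine ⟨p / ‖p‖, ?_, by field_simp⟩
  rw [map_div₀, Complex.conj_ofReal, div_mul_div_comm, Complex.conj_mul', div_eq_one_iff_eq]
  · ring
  · exact mul_ne_zero hn hn

theorem exists_vecMulVec_eq_of_mul_eq_zero {M N : Matrix (Fin 2) (Fin 2) ℂ} (h : M * N = 0)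
    (hM : M ≠ 0) (hN : N ≠ 0) : ∃ u r, u ≠ 0 ∧ star r ⬝ᵥ r = 1 ∧ M = vecMulVec u r := by
  obtain ⟨u, r, rfl⟩ := exists_vecMulVec_eq_of_det_eq_zero (det_eq_zero_of_mul_eq_zero_left h hN)
  have hu : u ≠ 0 := fun hu => hM (by simp [hu])
  have hr : r ≠ 0 := fun hr => hM (by simp [hr])
  obtain ⟨ρ, hρ, hrρ⟩ := exists_pos_sq_eq_star_dotProduct_self hr
  have hρ' : (ρ : ℂ) ≠ 0 := by exact_mod_cast hρ.ne'
  refine ⟨(ρ : ℂ) • u, (ρ : ℂ)⁻¹ • r, smul_ne_zero hρ' hu, ?_, ?_⟩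
  · rw [star_smul, smul_dotProduct, dotProduct_smul, hrρ]
    simp only [star_inv₀, Complex.star_def, Complex.conj_ofReal, smul_eq_mul]
    field_simp
  · rw [smul_vecMulVec, vecMulVec_smul, smul_smul, mul_inv_cancel₀ hρ', one_smul]

theorem dotProduct_vecMulVec_mulVec {R m n : Type*} [CommSemiring R] [Fintype m] [Fintype n]
    (x u : m → R) (r y : n → R) :
    x ⬝ᵥ (vecMulVec u r *ᵥ y) = (x ⬝ᵥ u) * (r ⬝ᵥ y) := by
  rw [vecMulVec_mulVec, op_smul_eq_smul, dotProduct_smul, smul_eq_mul, mul_comm]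

def conjPerp (x : Fin 2 → ℂ) : Fin 2 → ℂ := ![-conj (x 1), conj (x 0)]

section ConjPerp

variable (x y : Fin 2 → ℂ)

theorem conjPerp_conjPerp : conjPerp (conjPerp x) = -x := by
  ext i; fin_cases i <;> simp [conjPerp]

theorem conjPerp_smul (c : ℂ) : conjPerp (c • x) = conj c • conjPerp x := by
  ext i; fin_cases i <;> simp [conjPerp]

theorem conjPerp_ne_zero {x : Fin 2 → ℂ} (hx : x ≠ 0) : conjPerp x ≠ 0 := by
  intro h
  have := congrArg conjPerp h
  rw [conjPerp_conjPerp] at this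
  exact hx (neg_eq_zero.mp (this.trans (by ext i; fin_cases i <;> simp [conjPerp])))

theorem star_conjPerp_dotProduct_self : star (conjPerp x) ⬝ᵥ x = 0 := by
  simp [conjPerp, dotProduct, Fin.sum_univ_two]; ring

theorem star_dotProduct_conjPerp_self : star x ⬝ᵥ conjPerp x = 0 := by
  simp [conjPerp, dotProduct, Fin.sum_univ_two]; ring

theorem star_conjPerp_dotProduct_conjPerp : star (conjPerp x) ⬝ᵥ conjPerp y = star y ⬝ᵥ x := by
  simp [conjPerp, dotProduct, Fin.sum_univ_two]; ring

theorem conjPerp_dotProduct_conjPerp : conjPerp x ⬝ᵥ conjPerp y = conj (x ⬝ᵥ y) := by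
  simp [conjPerp, dotProduct, Fin.sum_univ_two]; ring

theorem star_conjPerp_dotProduct_anticomm :
    star (conjPerp y) ⬝ᵥ x = -(star (conjPerp x) ⬝ᵥ y) := by
  simp [conjPerp, dotProduct, Fin.sum_univ_two]; ring

theorem conjPerp_dotProduct_anticomm : conjPerp y ⬝ᵥ x = -conj (conjPerp x ⬝ᵥ y) := by
  simp [conjPerp, dotProduct, Fin.sum_univ_two]; ring

end ConjPerp

theorem exists_eq_smul_conjPerp {x y : Fin 2 → ℂ} (hx : x ≠ 0) (h : star y ⬝ᵥ x = 0) :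
    ∃ μ : ℂ, y = μ • conjPerp x := by
  obtain ⟨μ, hμ⟩ := exists_eq_smul_of_dotProduct_eq_zero hx (by rwa [dotProduct_comm])
  refine ⟨conj μ, ?_⟩
  rw [← star_star y, hμ]
  ext i; fin_cases i <;> simp [conjPerp]

theorem exists_eq_smul_of_star_conjPerp_dotProduct_eq_zero {x y : Fin 2 → ℂ} (hx : x ≠ 0)
    (h : star (conjPerp x) ⬝ᵥ y = 0) : ∃ μ : ℂ, y = μ • x := by
  have hx' : star (conjPerp x) ≠ 0 := star_ne_zero.mpr (conjPerp_ne_zero hx)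
  obtain ⟨μ, hμ⟩ := exists_eq_smul_of_dotProduct_eq_zero hx' h
  refine ⟨-μ, hμ.trans ?_⟩
  ext i; fin_cases i <;> simp [conjPerp]

theorem exists_eq_smul_vecMulVec_conjPerp {a b : Fin 2 → ℂ} {B : Matrix (Fin 2) (Fin 2) ℂ}
    (ha : a ≠ 0) (hb : b ≠ 0) (hB : B ≠ 0) (h₁ : vecMulVec a b * Bᴴ = 0)
    (h₂ : Bᴴ * vecMulVec a b = 0) :
    ∃ t : ℂ, t ≠ 0 ∧ B = t • vecMulVec (conjPerp a) (conjPerp b) := by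
  have hdet : B.det = 0 := by
    simpa [det_conjTranspose] using
      det_eq_zero_of_mul_eq_zero_right h₁ (vecMulVec_ne_zero ha hb)
  obtain ⟨c, d, rfl⟩ := exists_vecMulVec_eq_of_det_eq_zero hdet
  have hc : c ≠ 0 := fun hc => hB (by simp [hc])
  have hd : d ≠ 0 := fun hd => hB (by simp [hd])
  rw [conjTranspose_vecMulVec, vecMulVec_mul_vecMulVec] at h₁ h₂
  have hca : star c ⬝ᵥ a = 0 := by simpa [hb, hd] using h₂
  have hdb : star d ⬝ᵥ b = 0 := by simpa [dotProduct_comm b, ha, hc] using h₁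
  obtain ⟨γ, rfl⟩ := exists_eq_smul_conjPerp ha hca
  obtain ⟨δ, rfl⟩ := exists_eq_smul_conjPerp hb hdb
  refine ⟨γ * δ, fun h => hB ?_, by rw [smul_vecMulVec, vecMulVec_smul, smul_smul]⟩
  rw [smul_vecMulVec, vecMulVec_smul, smul_smul, h, zero_smul]

section MixedConditions

variable {a b e f : Fin 2 → ℂ} {t u : ℂ}

theorem exists_eq_smul_of_conjTranspose_mul_add_eq_zero (ht : t ≠ 0) (hb : b ≠ 0)
    (h : (t • vecMulVec (conjPerp a) (conjPerp b))ᴴ * vecMulVec e f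
      + (u • vecMulVec (conjPerp e) (conjPerp f))ᴴ * vecMulVec a b = 0)
    (hχ : star (conjPerp a) ⬝ᵥ e ≠ 0) : ∃ μ : ℂ, f = μ • b := by
  set χ := star (conjPerp a) ⬝ᵥ e
  have key : vecMulVec (star (conjPerp b)) ((star t * χ) • f)
      = vecMulVec (star (conjPerp f)) ((star u * χ) • b) := by
    simp only [conjTranspose_smul, conjTranspose_vecMulVec, smul_mul, vecMulVec_mul_vecMulVec,
      star_conjPerp_dotProduct_anticomm a e] at h
    rw [← sub_eq_zero, ← h]
    simp only [vecMulVec_smul]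
    module
  obtain ⟨μ, hμ⟩ := exists_eq_smul_of_vecMulVec_eq (star_ne_zero.mpr (conjPerp_ne_zero hb)) key
  have hc : star t * χ ≠ 0 := mul_ne_zero (by simpa using ht) hχ
  exact ⟨(star t * χ)⁻¹ * μ * (star u * χ), by
    rw [← smul_smul, ← smul_smul, ← hμ, inv_smul_smul₀ hc]⟩

theorem exists_eq_smul_conjPerp_of_conjTranspose_mul_add_eq_zero (ht : t ≠ 0) (hu : u ≠ 0)
    (hb : b ≠ 0)
    (h : (t • vecMulVec (conjPerp a) (conjPerp b))ᴴ * (u • vecMulVec (conjPerp e) (conjPerp f))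
      + (vecMulVec e f)ᴴ * vecMulVec a b = 0)
    (hχ : star e ⬝ᵥ a ≠ 0) : ∃ ν : ℂ, f = ν • conjPerp b := by
  set χ := star e ⬝ᵥ a
  have key : vecMulVec (star (conjPerp b)) ((star t * u * χ) • conjPerp f)
      = vecMulVec (star f) (-χ • b) := by
    simp only [conjTranspose_smul, conjTranspose_vecMulVec, smul_mul, Matrix.mul_smul,
      vecMulVec_mul_vecMulVec, star_conjPerp_dotProduct_conjPerp] at h
    rw [← sub_eq_zero, ← h]
    simp only [vecMulVec_smul]
    module
  obtain ⟨μ, hμ⟩ := exists_eq_smul_of_vecMulVec_eq (star_ne_zero.mpr (conjPerp_ne_zero hb)) key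
  have hc : star t * u * χ ≠ 0 := mul_ne_zero (mul_ne_zero (by simpa using ht) hu) hχ
  have hf : conjPerp f = ((star t * u * χ)⁻¹ * μ * -χ) • b := by
    rw [← smul_smul, ← smul_smul, ← hμ, inv_smul_smul₀ hc]
  refine ⟨-conj ((star t * u * χ)⁻¹ * μ * -χ), ?_⟩
  rw [← neg_neg f, ← conjPerp_conjPerp f, hf, conjPerp_smul, neg_smul]

end MixedConditions

/- Write `A = e fᵀ`. If `e ⟂ a`, the first mixed condition forces `f ∥ b`; if `e ⟂ J a`,
the second forces `f ∥ J b`. One of the two must hold, as `f` cannot be parallel to both. -/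
theorem exists_eq_smul_vecMulVec_of_unitarity {a b : Fin 2 → ℂ} {t : ℂ}
    {A B : Matrix (Fin 2) (Fin 2) ℂ} (ha : a ≠ 0) (hb : b ≠ 0) (ht : t ≠ 0) (hA : A ≠ 0)
    (hB : B ≠ 0) (hAB : A * Bᴴ = 0) (hBA : Bᴴ * A = 0)
    (hc : (t • vecMulVec (conjPerp a) (conjPerp b))ᴴ * A + Bᴴ * vecMulVec a b = 0)
    (hd : (t • vecMulVec (conjPerp a) (conjPerp b))ᴴ * B + Aᴴ * vecMulVec a b = 0) :
    ∃ p q : ℂ, (A = p • vecMulVec (conjPerp a) b ∧ B = q • vecMulVec a (conjPerp b)) ∨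
      (B = p • vecMulVec (conjPerp a) b ∧ A = q • vecMulVec a (conjPerp b)) := by
  obtain ⟨e, f, rfl⟩ := exists_vecMulVec_eq_of_det_eq_zero
    (det_eq_zero_of_mul_eq_zero_left hAB (by simpa using hB))
  have he : e ≠ 0 := fun he => hA (by simp [he])
  have hf : f ≠ 0 := fun hf => hA (by simp [hf])
  obtain ⟨u, hu, rfl⟩ := exists_eq_smul_vecMulVec_conjPerp he hf hB hAB hBA
  by_cases hea : star e ⬝ᵥ a = 0
  · obtain ⟨ε, rfl⟩ := exists_eq_smul_conjPerp ha hea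
    have hε : ε ≠ 0 := by rintro rfl; simp at he
    have hχ : star (conjPerp a) ⬝ᵥ ε • conjPerp a ≠ 0 := by
      rw [dotProduct_smul, star_conjPerp_dotProduct_conjPerp, smul_eq_mul]
      exact mul_ne_zero hε (mt dotProduct_star_self_eq_zero.mp ha)
    obtain ⟨μ, rfl⟩ := exists_eq_smul_of_conjTranspose_mul_add_eq_zero ht hb hc hχ
    refine ⟨μ * ε, -(u * conj ε * conj μ), Or.inl ⟨?_, ?_⟩⟩
    · simp only [smul_vecMulVec, vecMulVec_smul, smul_smul]
    · simp only [conjPerp_smul, conjPerp_conjPerp, smul_vecMulVec, vecMulVec_smul,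
        smul_neg, neg_vecMulVec, smul_smul]
      module
  · have hae : star (conjPerp a) ⬝ᵥ e = 0 := by
      by_contra hae
      obtain ⟨μ, hμ⟩ := exists_eq_smul_of_conjTranspose_mul_add_eq_zero ht hb hc hae
      obtain ⟨ν, hν⟩ := exists_eq_smul_conjPerp_of_conjTranspose_mul_add_eq_zero ht hu hb hd hea
      have := congrArg (star (conjPerp b) ⬝ᵥ ·) (hμ.symm.trans hν)
      simp only [dotProduct_smul, star_conjPerp_dotProduct_self,
        star_conjPerp_dotProduct_conjPerp, smul_eq_mul, mul_zero] at this
      have hν0 : ν = 0 :=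
        (mul_eq_zero.mp this.symm).resolve_right (mt dotProduct_star_self_eq_zero.mp hb)
      exact hf (by rw [hν, hν0, zero_smul])
    obtain ⟨l, rfl⟩ := exists_eq_smul_of_star_conjPerp_dotProduct_eq_zero ha hae
    obtain ⟨ν, rfl⟩ := exists_eq_smul_conjPerp_of_conjTranspose_mul_add_eq_zero ht hu hb hd hea
    refine ⟨-(u * conj l * conj ν), ν * l, Or.inr ⟨?_, ?_⟩⟩
    · simp only [conjPerp_smul, conjPerp_conjPerp, smul_vecMulVec, vecMulVec_smul,
        smul_neg, vecMulVec_neg, smul_smul]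
      module
    · simp only [smul_vecMulVec, vecMulVec_smul, smul_smul]

section Coefficients

variable {a b : Fin 2 → ℂ} {t p q : ℂ} {α : ℝ}

theorem coefficients_of_sum_eq_one (hα : star a ⬝ᵥ a = (α : ℂ) ^ 2) (hα0 : α ≠ 0)
    (hb : star b ⬝ᵥ b = 1)
    (hsum : vecMulVec a b + t • vecMulVec (conjPerp a) (conjPerp b)
      + p • vecMulVec (conjPerp a) b + q • vecMulVec a (conjPerp b) = 1) :
    a ⬝ᵥ b = (α : ℂ) ^ 2 ∧ conjPerp a ⬝ᵥ b = conj p * (α : ℂ) ^ 2 ∧ t = 1 ∧ q = -conj p := by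
  have key : ∀ x y, (x ⬝ᵥ a) * (b ⬝ᵥ y) + t * ((x ⬝ᵥ conjPerp a) * (conjPerp b ⬝ᵥ y))
      + p * ((x ⬝ᵥ conjPerp a) * (b ⬝ᵥ y)) + q * ((x ⬝ᵥ a) * (conjPerp b ⬝ᵥ y)) = x ⬝ᵥ y := by
    intro x y
    have := congrArg (fun M => x ⬝ᵥ M *ᵥ y) hsum
    simpa only [add_mulVec, smul_mulVec, dotProduct_add, dotProduct_smul, smul_eq_mul,
      dotProduct_vecMulVec_mulVec, one_mulVec] using this
  have hb' : b ⬝ᵥ star b = 1 := by rw [dotProduct_comm, hb]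
  have hJb : conjPerp b ⬝ᵥ star (conjPerp b) = 1 := by
    rw [dotProduct_comm, star_conjPerp_dotProduct_conjPerp, hb]
  have hJa : star (conjPerp a) ⬝ᵥ conjPerp a = (α : ℂ) ^ 2 := by
    rw [star_conjPerp_dotProduct_conjPerp, hα]
  have hα2 : (α : ℂ) ^ 2 ≠ 0 := by exact_mod_cast pow_ne_zero 2 hα0
  have h₁ := key (star a) (star b)
  have h₂ := key (star (conjPerp a)) (star b)
  have h₃ := key (star a) (star (conjPerp b))
  have h₄ := key (star (conjPerp a)) (star (conjPerp b))
  simp only [hα, hb', hJa, hJb, star_dotProduct_conjPerp_self, star_conjPerp_dotProduct_self,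
    dotProduct_comm (conjPerp b) (star b), dotProduct_comm b (star (conjPerp b)),
    star_dotProduct_star, mul_zero, add_zero, zero_add, mul_one] at h₁ h₂ h₃ h₄
  have hab : a ⬝ᵥ b = (α : ℂ) ^ 2 := by
    rw [dotProduct_comm]; simpa using (congrArg star h₁).symm
  have hJab : conjPerp a ⬝ᵥ b = conj p * (α : ℂ) ^ 2 := by
    rw [dotProduct_comm]; simpa using (congrArg star h₂).symm
  rw [conjPerp_dotProduct_conjPerp, dotProduct_comm, hab] at h₄
  rw [conjPerp_dotProduct_anticomm, hJab] at h₃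
  refine ⟨hab, hJab, mul_right_cancel₀ hα2 ?_, mul_right_cancel₀ hα2 ?_⟩
  · simpa using h₄
  · simpa using h₃

theorem sq_mul_one_add_mul_conj_eq_one (hα : star a ⬝ᵥ a = (α : ℂ) ^ 2) (hα0 : α ≠ 0)
    (hb : star b ⬝ᵥ b = 1)
    (hnorm : vecMulVec a b * (vecMulVec a b)ᴴ
      + (t • vecMulVec (conjPerp a) (conjPerp b)) * (t • vecMulVec (conjPerp a) (conjPerp b))ᴴ
      + (p • vecMulVec (conjPerp a) b) * (p • vecMulVec (conjPerp a) b)ᴴ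
      + (q • vecMulVec a (conjPerp b)) * (q • vecMulVec a (conjPerp b))ᴴ = 1) :
    (α : ℂ) ^ 2 * (1 + q * conj q) = 1 := by
  have hb' : b ⬝ᵥ star b = 1 := by rw [dotProduct_comm, hb]
  have hJb : conjPerp b ⬝ᵥ star (conjPerp b) = 1 := by
    rw [dotProduct_comm, star_conjPerp_dotProduct_conjPerp, hb]
  simp only [conjTranspose_smul, conjTranspose_vecMulVec, smul_mul, Matrix.mul_smul,
    vecMulVec_mul_vecMulVec, hb', hJb, one_smul] at hnorm
  have h := congrArg (fun M => star a ⬝ᵥ M *ᵥ a) hnorm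
  simp only [add_mulVec, smul_mulVec, dotProduct_add, dotProduct_smul, smul_eq_mul,
    dotProduct_vecMulVec_mulVec, one_mulVec, hα, star_dotProduct_conjPerp_self,
    star_conjPerp_dotProduct_self, mul_zero, add_zero] at h
  have hα2 : (α : ℂ) ^ 2 ≠ 0 := by exact_mod_cast pow_ne_zero 2 hα0
  refine mul_left_cancel₀ hα2 ?_
  rw [starRingEnd_apply]
  linear_combination h

end Coefficients

def unitaryFrame (b : Fin 2 → ℂ) (ω : ℂ) : Matrix (Fin 2) (Fin 2) ℂ :=
  of ![b, ω • conjPerp b]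

section UnitaryFrame

variable (b x : Fin 2 → ℂ) (ω : ℂ)

theorem unitaryFrame_mulVec : unitaryFrame b ω *ᵥ x = ![b ⬝ᵥ x, ω * (conjPerp b ⬝ᵥ x)] := by
  ext i; fin_cases i <;> simp [unitaryFrame, Matrix.mulVec, dotProduct, Fin.sum_univ_two]; ring

theorem vecMul_conjTranspose_unitaryFrame :
    x ᵥ* (unitaryFrame b ω)ᴴ = ![x ⬝ᵥ star b, conj ω * (x ⬝ᵥ star (conjPerp b))] := by
  ext i; fin_cases i <;> simp [unitaryFrame, Matrix.vecMul, dotProduct, Fin.sum_univ_two]; ring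

variable {b ω}

theorem unitaryFrame_mem_unitaryGroup (hb : star b ⬝ᵥ b = 1) (hω : conj ω * ω = 1) :
    unitaryFrame b ω ∈ unitaryGroup (Fin 2) ℂ := by
  rw [mem_unitaryGroup_iff, star_eq_conjTranspose]
  simp only [dotProduct, Fin.sum_univ_two, Pi.star_apply, ← starRingEnd_apply] at hb
  ext i j
  fin_cases i <;> fin_cases j <;> simp [unitaryFrame, mul_apply, conjPerp, Fin.sum_univ_two]
  · linear_combination hb
  · ring
  · ring
  · linear_combination ω * conj ω * hb + hω

end UnitaryFrame

noncomputable def canonicalAp1 (α : ℝ) : Matrix (Fin 2) (Fin 2) ℂ :=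
  !![((α ^ 2 : ℝ) : ℂ), 0; ((α * Real.sqrt (1 - α ^ 2) : ℝ) : ℂ), 0]

noncomputable def canonicalAm1 (α : ℝ) : Matrix (Fin 2) (Fin 2) ℂ :=
  !![0, ((-(α * Real.sqrt (1 - α ^ 2)) : ℝ) : ℂ); 0, ((α ^ 2 : ℝ) : ℂ)]

noncomputable def canonicalAp2 (α : ℝ) : Matrix (Fin 2) (Fin 2) ℂ :=
  !![(((Real.sqrt (1 - α ^ 2)) ^ 2 : ℝ) : ℂ), 0; ((-(α * Real.sqrt (1 - α ^ 2)) : ℝ) : ℂ), 0]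

noncomputable def canonicalAm2 (α : ℝ) : Matrix (Fin 2) (Fin 2) ℂ :=
  !![0, ((α * Real.sqrt (1 - α ^ 2) : ℝ) : ℂ); 0, (((Real.sqrt (1 - α ^ 2)) ^ 2 : ℝ) : ℂ)]

theorem exists_unitary_conj_eq_canonical {a b : Fin 2 → ℂ} {t p q : ℂ} (ha : a ≠ 0)
    (hb : star b ⬝ᵥ b = 1) (hp : p ≠ 0)
    (hnorm : vecMulVec a b * (vecMulVec a b)ᴴ
      + (t • vecMulVec (conjPerp a) (conjPerp b)) * (t • vecMulVec (conjPerp a) (conjPerp b))ᴴ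
      + (p • vecMulVec (conjPerp a) b) * (p • vecMulVec (conjPerp a) b)ᴴ
      + (q • vecMulVec a (conjPerp b)) * (q • vecMulVec a (conjPerp b))ᴴ = 1)
    (hsum : vecMulVec a b + t • vecMulVec (conjPerp a) (conjPerp b)
      + p • vecMulVec (conjPerp a) b + q • vecMulVec a (conjPerp b) = 1) :
    ∃ α : ℝ, 0 < α ∧ α < 1 ∧ ∃ U ∈ unitaryGroup (Fin 2) ℂ,
      U * vecMulVec a b * Uᴴ = canonicalAp1 α ∧
      U * (t • vecMulVec (conjPerp a) (conjPerp b)) * Uᴴ = canonicalAm1 α ∧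
      U * (p • vecMulVec (conjPerp a) b) * Uᴴ = canonicalAp2 α ∧
      U * (q • vecMulVec a (conjPerp b)) * Uᴴ = canonicalAm2 α := by
  obtain ⟨α, hα0, hα⟩ := exists_pos_sq_eq_star_dotProduct_self ha
  obtain ⟨hab, hJab, rfl, rfl⟩ := coefficients_of_sum_eq_one hα hα0.ne' hb hsum
  have hnorm' := sq_mul_one_add_mul_conj_eq_one hα hα0.ne' hb hnorm
  obtain ⟨ζ, hζ, hpζ⟩ := exists_eq_norm_mul_unit hp
  set ρ := ‖p‖
  have hρ : 0 < ρ := norm_pos_iff.mpr hp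
  have hαρ : α ^ 2 * (1 + ρ ^ 2) = 1 := by
    rw [map_neg, Complex.conj_conj, neg_mul_neg, Complex.conj_mul'] at hnorm'
    exact_mod_cast hnorm'
  have hα1 : α < 1 := by nlinarith [mul_pos (pow_pos hα0 2) (pow_pos hρ 2)]
  have hβ : √(1 - α ^ 2) = α * ρ := by
    rw [show 1 - α ^ 2 = (α * ρ) ^ 2 by linear_combination -hαρ]
    exact Real.sqrt_sq (by positivity)
  -- the phase `-ζ̄` of the second row makes all entries of the conjugated matrices real
  set U := unitaryFrame b (-conj ζ)
  have hU : U ∈ unitaryGroup (Fin 2) ℂ := unitaryFrame_mem_unitaryGroup hb (by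
    rw [map_neg, Complex.conj_conj, neg_mul_neg, mul_comm, hζ])
  have hUa : U *ᵥ a = ![(α : ℂ) ^ 2, ρ * (α : ℂ) ^ 2] := by
    rw [unitaryFrame_mulVec, dotProduct_comm, hab, conjPerp_dotProduct_anticomm, hJab, hpζ]
    ext i; fin_cases i <;> simp
    linear_combination ρ * α ^ 2 * hζ
  have hUJa : U *ᵥ conjPerp a = (conj ζ * (α : ℂ) ^ 2) • ![(ρ : ℂ), -1] := by
    rw [unitaryFrame_mulVec, dotProduct_comm, hJab, conjPerp_dotProduct_conjPerp,
      dotProduct_comm, hab, hpζ]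
    ext i; fin_cases i <;> simp; ring
  have hbU : b ᵥ* Uᴴ = ![1, 0] := by
    rw [vecMul_conjTranspose_unitaryFrame, dotProduct_comm, hb, dotProduct_comm,
      star_conjPerp_dotProduct_self, mul_zero]
  have hJbU : conjPerp b ᵥ* Uᴴ = ![0, -ζ] := by
    rw [vecMul_conjTranspose_unitaryFrame, dotProduct_comm, star_dotProduct_conjPerp_self,
      dotProduct_comm, star_conjPerp_dotProduct_conjPerp, hb]
    simp
  refine ⟨α, hα0, hα1, U, hU, ?_, ?_, ?_, ?_⟩ <;>
    simp only [Matrix.mul_smul, Matrix.smul_mul, mul_vecMulVec, vecMulVec_mul, hUa, hUJa, hbU,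
      hJbU, canonicalAp1, canonicalAm1, canonicalAp2, canonicalAm2, hβ] <;>
    ext i j <;> fin_cases i <;> fin_cases j <;> simp [hpζ] <;> grind

theorem square_lattice_two_dim_coin_classification_general
    (Ap1 Am1 Ap2 Am2 : Matrix (Fin 2) (Fin 2) ℂ)
    (hp1 : Ap1 ≠ 0) (hm1 : Am1 ≠ 0) (hp2 : Ap2 ≠ 0) (hm2 : Am2 ≠ 0)
    -- (i)
    (h1a : Ap1 * Am1ᴴ = 0) (h1b : Am1ᴴ * Ap1 = 0)
    (h2a : Ap2 * Am2ᴴ = 0) (h2b : Am2ᴴ * Ap2 = 0)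
    -- (ii) for (i,j) = (1,2) and (2,1)
    (h12c : Am1ᴴ * Ap2 + Am2ᴴ * Ap1 = 0)
    (h12d : Am1ᴴ * Am2 + Ap2ᴴ * Ap1 = 0)
    -- (iii)
    (hnorm1 : Ap1 * Ap1ᴴ + Am1 * Am1ᴴ + Ap2 * Ap2ᴴ + Am2 * Am2ᴴ = 1)
    -- (iv)
    (hsum : Ap1 + Am1 + Ap2 + Am2 = 1) :
    ∃ α : ℝ, 0 < α ∧ α < 1 ∧
      ∃ U : Matrix (Fin 2) (Fin 2) ℂ, U * Uᴴ = 1 ∧ Uᴴ * U = 1 ∧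
        ((U * Ap1 * Uᴴ = !![((α ^ 2 : ℝ) : ℂ), 0;
            ((α * Real.sqrt (1 - α ^ 2) : ℝ) : ℂ), 0] ∧
          U * Am1 * Uᴴ = !![0, ((-(α * Real.sqrt (1 - α ^ 2)) : ℝ) : ℂ);
            0, ((α ^ 2 : ℝ) : ℂ)] ∧
          U * Ap2 * Uᴴ = !![(((Real.sqrt (1 - α ^ 2)) ^ 2 : ℝ) : ℂ), 0;
            ((-(α * Real.sqrt (1 - α ^ 2)) : ℝ) : ℂ), 0] ∧
          U * Am2 * Uᴴ = !![0, ((α * Real.sqrt (1 - α ^ 2) : ℝ) : ℂ);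
            0, (((Real.sqrt (1 - α ^ 2)) ^ 2 : ℝ) : ℂ)]) ∨
         (U * Ap1 * Uᴴ = !![((α ^ 2 : ℝ) : ℂ), 0;
            ((α * Real.sqrt (1 - α ^ 2) : ℝ) : ℂ), 0] ∧
          U * Am1 * Uᴴ = !![0, ((-(α * Real.sqrt (1 - α ^ 2)) : ℝ) : ℂ);
            0, ((α ^ 2 : ℝ) : ℂ)] ∧
          U * Am2 * Uᴴ = !![(((Real.sqrt (1 - α ^ 2)) ^ 2 : ℝ) : ℂ), 0;
            ((-(α * Real.sqrt (1 - α ^ 2)) : ℝ) : ℂ), 0] ∧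
          U * Ap2 * Uᴴ = !![0, ((α * Real.sqrt (1 - α ^ 2) : ℝ) : ℂ);
            0, (((Real.sqrt (1 - α ^ 2)) ^ 2 : ℝ) : ℂ)])) := by
  obtain ⟨a, b, ha, hb, rfl⟩ := exists_vecMulVec_eq_of_mul_eq_zero h1a hp1 (by simpa using hm1)
  have hb0 : b ≠ 0 := by rintro rfl; simp at hb
  obtain ⟨t, ht, rfl⟩ := exists_eq_smul_vecMulVec_conjPerp ha hb0 hm1 h1a h1b
  obtain ⟨p, q, ⟨rfl, rfl⟩ | ⟨rfl, rfl⟩⟩ :=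
    exists_eq_smul_vecMulVec_of_unitarity ha hb0 ht hp2 hm2 h2a h2b h12c h12d
  · obtain ⟨α, hα0, hα1, U, hU, h₁, h₂, h₃, h₄⟩ :=
      exists_unitary_conj_eq_canonical ha hb (by rintro rfl; simp at hp2) hnorm1 hsum
    exact ⟨α, hα0, hα1, U, mem_unitaryGroup_iff.mp hU, mem_unitaryGroup_iff'.mp hU,
      Or.inl ⟨h₁, h₂, h₃, h₄⟩⟩
  · rw [add_right_comm] at hnorm1 hsum
    obtain ⟨α, hα0, hα1, U, hU, h₁, h₂, h₃, h₄⟩ :=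
      exists_unitary_conj_eq_canonical ha hb (by rintro rfl; simp at hm2) hnorm1 hsum
    exact ⟨α, hα0, hα1, U, mem_unitaryGroup_iff.mp hU, mem_unitaryGroup_iff'.mp hU,
      Or.inr ⟨h₁, h₂, h₃, h₄⟩⟩

/-- Classification of quantum walks with a two-dimensional coin on the simple square
lattice. Writing `Ap1, Am1, Ap2, Am2` for the transition matrices `A₊₁, A₋₁, A₊₂, A₋₂`,
if these are nonzero and satisfy the simple-square-lattice unitarity conditions
(i)–(iii) together with the normalization `A₊₁ + A₋₁ + A₊₂ + A₋₂ = 1`, then there are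
`α ∈ (0,1)` and a unitary `U` such that, with `β = √(1−α²)`, the matrices `U·A_h·Uᴴ`
take the canonical Weyl form — either as displayed or with the values of `A₊₂` and
`A₋₂` exchanged. -/
theorem square_lattice_two_dim_coin_classification
    (Ap1 Am1 Ap2 Am2 : Matrix (Fin 2) (Fin 2) ℂ)
    (hp1 : Ap1 ≠ 0) (hm1 : Am1 ≠ 0) (hp2 : Ap2 ≠ 0) (hm2 : Am2 ≠ 0)
    -- (i)
    (h1a : Ap1 * Am1ᴴ = 0) (h1b : Am1ᴴ * Ap1 = 0)
    (h2a : Ap2 * Am2ᴴ = 0) (h2b : Am2ᴴ * Ap2 = 0)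
    -- (ii) for (i,j) = (1,2) and (2,1)
    (h12a : Ap1 * Am2ᴴ + Ap2 * Am1ᴴ = 0)
    (h21a : Ap2 * Am1ᴴ + Ap1 * Am2ᴴ = 0)
    (h12b : Ap1 * Ap2ᴴ + Am2 * Am1ᴴ = 0)
    (h21b : Ap2 * Ap1ᴴ + Am1 * Am2ᴴ = 0)
    (h12c : Am1ᴴ * Ap2 + Am2ᴴ * Ap1 = 0)
    (h21c : Am2ᴴ * Ap1 + Am1ᴴ * Ap2 = 0)
    (h12d : Am1ᴴ * Am2 + Ap2ᴴ * Ap1 = 0)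
    (h21d : Am2ᴴ * Am1 + Ap1ᴴ * Ap2 = 0)
    -- (iii)
    (hnorm1 : Ap1 * Ap1ᴴ + Am1 * Am1ᴴ + Ap2 * Ap2ᴴ + Am2 * Am2ᴴ = 1)
    (hnorm2 : Ap1ᴴ * Ap1 + Am1ᴴ * Am1 + Ap2ᴴ * Ap2 + Am2ᴴ * Am2 = 1)
    -- (iv)
    (hsum : Ap1 + Am1 + Ap2 + Am2 = 1) :
    ∃ α : ℝ, 0 < α ∧ α < 1 ∧
      ∃ U : Matrix (Fin 2) (Fin 2) ℂ, U * Uᴴ = 1 ∧ Uᴴ * U = 1 ∧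
        ((U * Ap1 * Uᴴ = !![((α ^ 2 : ℝ) : ℂ), 0;
            ((α * Real.sqrt (1 - α ^ 2) : ℝ) : ℂ), 0] ∧
          U * Am1 * Uᴴ = !![0, ((-(α * Real.sqrt (1 - α ^ 2)) : ℝ) : ℂ);
            0, ((α ^ 2 : ℝ) : ℂ)] ∧
          U * Ap2 * Uᴴ = !![(((Real.sqrt (1 - α ^ 2)) ^ 2 : ℝ) : ℂ), 0;
            ((-(α * Real.sqrt (1 - α ^ 2)) : ℝ) : ℂ), 0] ∧
          U * Am2 * Uᴴ = !![0, ((α * Real.sqrt (1 - α ^ 2) : ℝ) : ℂ);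
            0, (((Real.sqrt (1 - α ^ 2)) ^ 2 : ℝ) : ℂ)]) ∨
         (U * Ap1 * Uᴴ = !![((α ^ 2 : ℝ) : ℂ), 0;
            ((α * Real.sqrt (1 - α ^ 2) : ℝ) : ℂ), 0] ∧
          U * Am1 * Uᴴ = !![0, ((-(α * Real.sqrt (1 - α ^ 2)) : ℝ) : ℂ);
            0, ((α ^ 2 : ℝ) : ℂ)] ∧
          U * Am2 * Uᴴ = !![(((Real.sqrt (1 - α ^ 2)) ^ 2 : ℝ) : ℂ), 0;
            ((-(α * Real.sqrt (1 - α ^ 2)) : ℝ) : ℂ), 0] ∧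
          U * Ap2 * Uᴴ = !![0, ((α * Real.sqrt (1 - α ^ 2) : ℝ) : ℂ);
            0, (((Real.sqrt (1 - α ^ 2)) ^ 2 : ℝ) : ℂ)])) :=
  square_lattice_two_dim_coin_classification_general Ap1 Am1 Ap2 Am2 hp1 hm1 hp2 hm2 h1a h1b h2a h2b
    h12c h12d hnorm1 hsum
end

section
/- Let A₊₁, A₋₁, A₊₂, A₋₂ be nonzero 2×2 complex matrices satisfying the simple-square-lattice unitarity conditions: (i) A₊ᵢ·A₋ᵢᴴ = 0 and A₋ᵢᴴ·A₊ᵢ = 0 for i = 1, 2; (ii) for {i, j} = {1, 2}: A₊ᵢ·A₋ⱼᴴ + A₊ⱼ·A₋ᵢᴴ = 0, A₊ᵢ·A₊ⱼᴴ + A₋ⱼ·A₋ᵢᴴ = 0, A₋ᵢᴴ·A₊ⱼ + A₋ⱼᴴ·A₊ᵢ = 0, and A₋ᵢᴴ·A₋ⱼ + A₊ⱼᴴ·A₊ᵢ = 0. Suppose moreover that a 2×2 complex matrix A_e satisfies, for both h ∈ {+1, +2} (with −h denoting the corresponding A₋ᵢ): A_h·A_eᴴ + A_e·A_{−h}ᴴ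 = 0 and A_eᴴ·A_h + A_{−h}ᴴ·A_e = 0. Then A_e = 0. In other words, no quantum walk with a two-dimensional coin on the simple square lattice can have a nonzero transition matrix associated to the identity element (a loop, i.e., a mass term). -/
/-!
Write `⟨x, y⟩ = star x ⬝ᵥ y`. Each `A_{±h}` kills a nonzero matrix, so it has rank one:
`A₊₁ = a b*`, `A₋₁ = c d*`, `A₊₂ = e f*`, `A₋₂ = g k*`, and (i) gives `b ⟂ d`, `c ⟂ a`, `f ⟂ k`,
`g ⟂ e`. Suppose `A_e ≠ 0`. The loop condition for `±1` reads `a (A_e b)* + (A_e d) c* = 0`, so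
`A_e b ⟂ a` and `A_e d ⟂ c`; likewise `A_e f ⟂ e`, and `A_e f ≠ 0`, as `A_e f = 0` would force
`A_e k = 0`. Applying the cross conditions (ii) to `a` gives `⟨b, f⟩⟨e, a⟩ = 0` and
`⟨b, k⟩⟨g, a⟩ = 0`. In `ℂ²` the orthogonal complement of a nonzero vector is a line, which settles
both cases:
* `b ⟂ f`: then `f ∥ d`, so `A_e f ⟂ c` like `A_e d`, i.e. `A_e f ∥ a`, and `e ⟂ A_e f` gives
  `e ⟂ a`; but then `k ∥ b` and `g ∥ a`, so neither `⟨b, k⟩` nor `⟨g, a⟩` vanishes.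
* `e ⟂ a`: then `g ∥ a`, so `b ⟂ k`, i.e. `f ∥ b`; thus `A_e f` is orthogonal to `a` (like
  `A_e b`) and to `e ⟂ a`, hence zero.
-/

open Matrix
open scoped ComplexOrder

section Field

variable {K : Type*} [Field K]

theorem det_eq_zero_of_mul_eq_zero {n : Type*} [Fintype n] [DecidableEq n]
    {M N : Matrix n n K} (h : M * N = 0) (hN : N ≠ 0) : M.det = 0 := by
  by_contra hM
  exact hN (by rw [← nonsing_inv_mul_cancel_left M N (Ne.isUnit hM), h, Matrix.mul_zero])

theorem exists_smul_eq_of_mul_eq_mul {y z : Fin 2 → K} (hy : y ≠ 0)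
    (h : y 0 * z 1 = y 1 * z 0) : ∃ t : K, z = t • y := by
  have hminor : ∀ i j, z j * y i = z i * y j := Fin.forall_fin_two.2
    ⟨Fin.forall_fin_two.2 ⟨rfl, by linear_combination h⟩,
      Fin.forall_fin_two.2 ⟨by linear_combination -h, rfl⟩⟩
  obtain ⟨i, hi⟩ := Function.ne_iff.1 hy
  refine ⟨z i / y i, funext fun j => ?_⟩
  rw [Pi.smul_apply, smul_eq_mul, div_mul_eq_mul_div, eq_div_iff hi, hminor]

theorem exists_smul_eq_of_dotProduct_eq_zero {x y z : Fin 2 → K} (hx : x ≠ 0) (hy : y ≠ 0)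
    (hxy : x ⬝ᵥ y = 0) (hxz : x ⬝ᵥ z = 0) : ∃ t : K, z = t • y := by
  refine exists_smul_eq_of_mul_eq_mul hy ?_
  simp only [dotProduct, Fin.sum_univ_two] at hxy hxz
  have hdet : ∀ i, x i * (y 0 * z 1 - y 1 * z 0) = 0 := Fin.forall_fin_two.2
    ⟨by linear_combination z 1 * hxy - y 1 * hxz, by linear_combination y 0 * hxz - z 0 * hxy⟩
  obtain ⟨i, hi⟩ := Function.ne_iff.1 hx
  exact sub_eq_zero.1 ((mul_eq_zero.1 (hdet i)).resolve_left hi)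

theorem exists_eq_vecMulVec_of_det_eq_zero {M : Matrix (Fin 2) (Fin 2) K} (hM : M ≠ 0)
    (hdet : M.det = 0) : ∃ u v : Fin 2 → K, u ≠ 0 ∧ v ≠ 0 ∧ M = vecMulVec u v := by
  rw [det_fin_two] at hdet
  by_cases h0 : M 0 = 0
  · refine ⟨Pi.single 1 1, M 1, by simp,
      fun h1 => hM (funext (Fin.forall_fin_two.2 ⟨h0, h1⟩)), ?_⟩
    ext i j
    fin_cases i <;> simp [vecMulVec_apply, congrFun h0 j]
  · obtain ⟨t, ht⟩ := exists_smul_eq_of_mul_eq_mul h0 (z := M 1) (by linear_combination hdet)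
    refine ⟨![1, t], M 0, by simp, h0, ?_⟩
    ext i j
    fin_cases i <;> simp [vecMulVec_apply, ht]

theorem dotProduct_eq_zero_of_common_annihilator {x y z w : Fin 2 → K} (hx : x ≠ 0)
    (hy : y ≠ 0) (hxy : x ⬝ᵥ y = 0) (hxz : x ⬝ᵥ z = 0) (hwy : w ⬝ᵥ y = 0) : w ⬝ᵥ z = 0 := by
  obtain ⟨t, rfl⟩ := exists_smul_eq_of_dotProduct_eq_zero hx hy hxy hxz
  rw [dotProduct_smul, hwy, smul_zero]

theorem dotProduct_mulVec_eq_zero_of_common_annihilator {x y z w : Fin 2 → K}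
    (X : Matrix (Fin 2) (Fin 2) K) (hx : x ≠ 0) (hy : y ≠ 0) (hxy : x ⬝ᵥ y = 0)
    (hxz : x ⬝ᵥ z = 0) (hwy : w ⬝ᵥ (X *ᵥ y) = 0) : w ⬝ᵥ (X *ᵥ z) = 0 := by
  rw [dotProduct_mulVec] at hwy ⊢
  exact dotProduct_eq_zero_of_common_annihilator hx hy hxy hxz hwy

end Field

section StarField

variable {K : Type*} [Field K] [StarRing K] {n : Type*} [Fintype n]

theorem star_dotProduct_eq_zero_comm {x y : n → K} : star x ⬝ᵥ y = 0 ↔ star y ⬝ᵥ x = 0 := by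
  rw [← star_eq_zero, star_dotProduct, star_star]

theorem vecMulVec_star_mulVec (a b x : n → K) : vecMulVec a (star b) *ᵥ x = (star b ⬝ᵥ x) • a := by
  rw [vecMulVec_mulVec, op_smul_eq_smul]

theorem vecMulVec_star_mul_conjTranspose (a b : n → K) (X : Matrix n n K) :
    vecMulVec a (star b) * Xᴴ = vecMulVec a (star (X *ᵥ b)) := by
  rw [vecMulVec_mul, vecMul_conjTranspose, star_star]

theorem star_dotProduct_eq_zero_of_vecMulVec_mul_vecMulVec_eq_zero {u v w x : n → K}
    (hu : u ≠ 0) (hx : x ≠ 0) (h : vecMulVec u (star v) * vecMulVec w (star x) = 0) :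
    star v ⬝ᵥ w = 0 := by
  rw [vecMulVec_mul_vecMulVec, vecMulVec_eq_zero, smul_eq_zero, star_eq_zero] at h
  exact (h.resolve_left hu).resolve_right hx

theorem star_dotProduct_mul_star_dotProduct_eq_zero {a b c d e f : n → K} (R : Matrix n n K)
    (h : vecMulVec a (star b) * vecMulVec f (star e) + R * vecMulVec d (star c) = 0)
    (hca : star c ⬝ᵥ a = 0) (ha : a ≠ 0) : (star b ⬝ᵥ f) * (star e ⬝ᵥ a) = 0 := by
  have h' := congrArg (· *ᵥ a) h
  simp only [add_mulVec, ← mulVec_mulVec, vecMulVec_star_mulVec, hca, mulVec_smul, zero_smul,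
    mulVec_zero, add_zero, zero_mulVec, smul_smul, smul_eq_zero] at h'
  exact mul_comm (star e ⬝ᵥ a) _ ▸ h'.resolve_right ha

theorem exists_vecMulVec_star_of_mul_conjTranspose_eq_zero {P M : Matrix (Fin 2) (Fin 2) K}
    (hP : P ≠ 0) (hM : M ≠ 0) (hPM : P * Mᴴ = 0) (hMP : Mᴴ * P = 0) :
    ∃ a b c d : Fin 2 → K, a ≠ 0 ∧ b ≠ 0 ∧ c ≠ 0 ∧ d ≠ 0 ∧ star b ⬝ᵥ d = 0 ∧
      star c ⬝ᵥ a = 0 ∧ P = vecMulVec a (star b) ∧ M = vecMulVec c (star d) := by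
  obtain ⟨a, b, ha, hb, rfl⟩ := exists_eq_vecMulVec_of_det_eq_zero hP
    (det_eq_zero_of_mul_eq_zero hPM (mt conjTranspose_eq_zero.1 hM))
  obtain ⟨c, d, hc, hd, rfl⟩ := exists_eq_vecMulVec_of_det_eq_zero hM
    (by simpa using det_eq_zero_of_mul_eq_zero hMP hP)
  simp only [conjTranspose_vecMulVec] at hPM hMP
  refine ⟨a, star b, c, star d, ha, star_ne_zero.2 hb, hc, star_ne_zero.2 hd, ?_, ?_, ?_, ?_⟩
  · exact star_dotProduct_eq_zero_of_vecMulVec_mul_vecMulVec_eq_zero ha hc (by simpa using hPM)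
  · exact star_dotProduct_eq_zero_of_vecMulVec_mul_vecMulVec_eq_zero (star_ne_zero.2 hd)
      (star_ne_zero.2 hb) (by simpa using hMP)
  all_goals rw [star_star]

theorem star_dotProduct_left_eq_zero_of_vecMulVec_add_eq_zero {a c u v : n → K}
    (h : vecMulVec a (star u) + vecMulVec v (star c) = 0) (hca : star c ⬝ᵥ a = 0)
    (ha : a ≠ 0) : star a ⬝ᵥ u = 0 := by
  have h' := congrArg (· *ᵥ a) h
  simp only [add_mulVec, vecMulVec_star_mulVec, hca, zero_smul, add_zero, zero_mulVec,
    smul_eq_zero] at h'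
  exact star_dotProduct_eq_zero_comm.1 (h'.resolve_right ha)

theorem star_dotProduct_right_eq_zero_of_vecMulVec_add_eq_zero {a c u v : n → K}
    (h : vecMulVec a (star u) + vecMulVec v (star c) = 0) (hca : star c ⬝ᵥ a = 0)
    (hc : c ≠ 0) : star c ⬝ᵥ v = 0 := by
  have h' := congrArg (star c ᵥ* ·) h
  simp only [vecMul_add, vecMul_vecMulVec, hca, zero_smul, zero_add, vecMul_zero,
    smul_eq_zero, star_eq_zero] at h'
  exact h'.resolve_right hc

end StarField

section RCLike

variable {𝕜 : Type*} [RCLike 𝕜]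

theorem star_dotProduct_ne_zero_of_orthogonal {x y z : Fin 2 → 𝕜} (hx : x ≠ 0) (hy : y ≠ 0)
    (hz : z ≠ 0) (hyx : star y ⬝ᵥ x = 0) (hxz : star x ⬝ᵥ z = 0) : star y ⬝ᵥ z ≠ 0 := by
  obtain ⟨t, rfl⟩ := exists_smul_eq_of_dotProduct_eq_zero (star_ne_zero.2 hx) hy
    (star_dotProduct_eq_zero_comm.1 hyx) hxz
  rw [dotProduct_smul, smul_ne_zero_iff]
  exact ⟨left_ne_zero_of_smul hz, mt dotProduct_star_self_eq_zero.1 hy⟩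

theorem eq_zero_of_mulVec_eq_zero_of_orthogonal {X : Matrix (Fin 2) (Fin 2) 𝕜} {b d : Fin 2 → 𝕜}
    (hb : b ≠ 0) (hd : d ≠ 0) (hbd : star b ⬝ᵥ d = 0) (hXb : X *ᵥ b = 0) (hXd : X *ᵥ d = 0) :
    X = 0 := by
  have hrow : ∀ i, X i = 0 := fun i => by
    by_contra hi
    refine star_dotProduct_ne_zero_of_orthogonal (star_ne_zero.2 hi) hb hd ?_ ?_ hbd
    · rw [star_dotProduct_star, star_eq_zero]
      exact congrFun hXb i
    · rw [star_star]
      exact congrFun hXd i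
  ext i j
  simp [hrow i]

end RCLike

theorem square_lattice_no_mass_term_general
    (Ap1 Am1 Ap2 Am2 : Matrix (Fin 2) (Fin 2) ℂ)
    (hp1 : Ap1 ≠ 0) (hm1 : Am1 ≠ 0) (hp2 : Ap2 ≠ 0) (hm2 : Am2 ≠ 0)
    -- (i)
    (h1a : Ap1 * Am1ᴴ = 0) (h1b : Am1ᴴ * Ap1 = 0)
    (h2a : Ap2 * Am2ᴴ = 0) (h2b : Am2ᴴ * Ap2 = 0)
    -- (ii) for (i,j) = (1,2) and (2,1)
    (h12a : Ap1 * Am2ᴴ + Ap2 * Am1ᴴ = 0)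
    (h12b : Ap1 * Ap2ᴴ + Am2 * Am1ᴴ = 0)
    -- loop conditions
    (Ae : Matrix (Fin 2) (Fin 2) ℂ)
    (he1a : Ap1 * Aeᴴ + Ae * Am1ᴴ = 0)
    (he2a : Ap2 * Aeᴴ + Ae * Am2ᴴ = 0) :
    Ae = 0 := by
  obtain ⟨a, b, c, d, ha, hb, hc, hd, hbd, hca, rfl, rfl⟩ :=
    exists_vecMulVec_star_of_mul_conjTranspose_eq_zero hp1 hm1 h1a h1b
  obtain ⟨e, f, g, k, he, hf, hg, hk, hfk, hge, rfl, rfl⟩ :=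
    exists_vecMulVec_star_of_mul_conjTranspose_eq_zero hp2 hm2 h2a h2b
  simp only [conjTranspose_vecMulVec, star_star] at h12a h12b he1a he2a
  rw [vecMulVec_star_mul_conjTranspose, mul_vecMulVec] at he1a he2a
  by_contra hAe
  have heAf := star_dotProduct_left_eq_zero_of_vecMulVec_add_eq_zero he2a hge he
  have hAf : Ae *ᵥ f ≠ 0 := fun h0 => hAe <| eq_zero_of_mulVec_eq_zero_of_orthogonal hf hk hfk h0
    (by simpa only [h0, star_zero, vecMulVec_zero, zero_add, vecMulVec_eq_zero, star_eq_zero, hg,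
      or_false] using he2a)
  have hga : star e ⬝ᵥ a = 0 → star g ⬝ᵥ a ≠ 0 :=
    star_dotProduct_ne_zero_of_orthogonal he hg ha hge
  have hbk_ga := star_dotProduct_mul_star_dotProduct_eq_zero _ h12a hca ha
  rcases mul_eq_zero.1 (star_dotProduct_mul_star_dotProduct_eq_zero _ h12b hca ha) with hbf | hea
  · have hcAf := dotProduct_mulVec_eq_zero_of_common_annihilator Ae (star_ne_zero.2 hb) hd hbd
      hbf (star_dotProduct_right_eq_zero_of_vecMulVec_add_eq_zero he1a hca hc)
    have hea := dotProduct_eq_zero_of_common_annihilator (star_ne_zero.2 hc) hAf hcAf hca heAf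
    exact mul_ne_zero (star_dotProduct_ne_zero_of_orthogonal hf hb hk hbf hfk) (hga hea) hbk_ga
  · have hbk := (mul_eq_zero.1 hbk_ga).resolve_right (hga hea)
    have haAf := dotProduct_mulVec_eq_zero_of_common_annihilator Ae (star_ne_zero.2 hk) hb
      (star_dotProduct_eq_zero_comm.1 hbk) (star_dotProduct_eq_zero_comm.1 hfk)
      (star_dotProduct_left_eq_zero_of_vecMulVec_add_eq_zero he1a hca ha)
    exact star_dotProduct_ne_zero_of_orthogonal ha he hAf hea haAf heAf

/-- No mass term on the simple square lattice: if the nonzero transition matrices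
`A₊₁, A₋₁, A₊₂, A₋₂` of a quantum walk with a two-dimensional coin satisfy the
simple-square-lattice unitarity conditions (i) and (ii), and a matrix `A_e`
(associated to the identity/loop edge) satisfies the loop unitarity conditions
`A_h·A_eᴴ + A_e·A_{−h}ᴴ = 0` and `A_eᴴ·A_h + A_{−h}ᴴ·A_e = 0` for `h ∈ {+1, +2}`,
then `A_e = 0`. -/
theorem square_lattice_no_mass_term
    (Ap1 Am1 Ap2 Am2 : Matrix (Fin 2) (Fin 2) ℂ)
    (hp1 : Ap1 ≠ 0) (hm1 : Am1 ≠ 0) (hp2 : Ap2 ≠ 0) (hm2 : Am2 ≠ 0)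
    -- (i)
    (h1a : Ap1 * Am1ᴴ = 0) (h1b : Am1ᴴ * Ap1 = 0)
    (h2a : Ap2 * Am2ᴴ = 0) (h2b : Am2ᴴ * Ap2 = 0)
    -- (ii) for (i,j) = (1,2) and (2,1)
    (h12a : Ap1 * Am2ᴴ + Ap2 * Am1ᴴ = 0)
    (h21a : Ap2 * Am1ᴴ + Ap1 * Am2ᴴ = 0)
    (h12b : Ap1 * Ap2ᴴ + Am2 * Am1ᴴ = 0)
    (h21b : Ap2 * Ap1ᴴ + Am1 * Am2ᴴ = 0)
    (h12c : Am1ᴴ * Ap2 + Am2ᴴ * Ap1 = 0)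
    (h21c : Am2ᴴ * Ap1 + Am1ᴴ * Ap2 = 0)
    (h12d : Am1ᴴ * Am2 + Ap2ᴴ * Ap1 = 0)
    (h21d : Am2ᴴ * Am1 + Ap1ᴴ * Ap2 = 0)
    -- loop conditions
    (Ae : Matrix (Fin 2) (Fin 2) ℂ)
    (he1a : Ap1 * Aeᴴ + Ae * Am1ᴴ = 0)
    (he1b : Aeᴴ * Ap1 + Am1ᴴ * Ae = 0)
    (he2a : Ap2 * Aeᴴ + Ae * Am2ᴴ = 0)
    (he2b : Aeᴴ * Ap2 + Am2ᴴ * Ae = 0) :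
    Ae = 0 :=
  square_lattice_no_mass_term_general Ap1 Am1 Ap2 Am2 hp1 hm1 hp2 hm2 h1a h1b h2a h2b h12a h12b Ae
    he1a he2a
end

section
/- Let G be a group with identity e, let s ≥ 1, let S be a finite subset of G, and for each h ∈ S let A_h be an s×s complex matrix. Let W be a continuous linear operator on the Hilbert space ℓ²(G; ℂˢ) of square-summable ℂˢ-valued functions on G such that (Wψ)(x) = Σ_{h∈S} A_h · ψ(x·h) for every ψ ∈ ℓ²(G; ℂˢ) and x ∈ G. Then W is unitary if and only if for every g ∈ G: Σ_{(h,h') ∈ S×S, h·h'⁻¹ = g} A_h·A_{h'}ᴴ equals the identity matrix I_s if g = e and 0 otherwise, and Σ_{(h,h') ∈ S×S, h⁻¹·h' = g} A_hᴴ·A_{h'} equals I_s if g = e and 0 otherwise. -/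
/-!
The adjoint of a finite combination of right translations with operator coefficients is again
such a combination, with inverted shifts and adjoint coefficients, and so is a product of two of
them. Hence `W*W` and `WW*` are combinations whose total coefficient at the shift `g` is the
matrix sum of the statement. Testing on δ-functions shows that a combination is the identity
exactly when its total coefficient at `g` is `δ_{g,e} · I`; and `W` is unitary iff
`W*W = WW* = 1`.
-/

open scoped InnerProductSpace

namespace ContinuousLinearMap

variable {𝕜 H : Type*} [RCLike 𝕜] [NormedAddCommGroup H] [InnerProductSpace 𝕜 H] [CompleteSpace H]

theorem surjective_and_norm_map_iff_mem_unitary (u : H →L[𝕜] H) :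
    (Function.Surjective u ∧ ∀ x, ‖u x‖ = ‖x‖) ↔ u ∈ unitary (H →L[𝕜] H) := by
  refine ⟨fun ⟨hsurj, hnorm⟩ => ?_, fun hu => ⟨fun y => ⟨star u y, ?_⟩, norm_map_of_mem_unitary hu⟩⟩
  · have hleft : star u * u = 1 := (norm_map_iff_adjoint_comp_self u).mp hnorm
    refine Unitary.mem_iff.mpr ⟨hleft, ext fun y => ?_⟩
    obtain ⟨x, rfl⟩ := hsurj y
    exact congrArg u (congrArg (· x) hleft)
  · exact congrArg (· y) (Unitary.mul_star_self_of_mem hu)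

end ContinuousLinearMap

section ShiftCombination

variable {𝕜 E G ι κ : Type*} [RCLike 𝕜] [NormedAddCommGroup E] [InnerProductSpace 𝕜 E] [Group G]

/-- In the notation `T_h|g⟩ = |g·h⁻¹⟩`, this says `V = Σ_{i ∈ P} T_{shift i} ⊗ coeff i`. -/
def IsShiftCombination (V : lp (fun _ : G => E) 2 →L[𝕜] lp (fun _ : G => E) 2) (P : Finset ι)
    (shift : ι → G) (coeff : ι → E →L[𝕜] E) : Prop :=
  ∀ ψ x, V ψ x = ∑ i ∈ P, coeff i (ψ (x * shift i))

namespace IsShiftCombination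

variable {V V' : lp (fun _ : G => E) 2 →L[𝕜] lp (fun _ : G => E) 2} {P : Finset ι} {P' : Finset κ}
  {shift : ι → G} {shift' : κ → G} {coeff : ι → E →L[𝕜] E} {coeff' : κ → E →L[𝕜] E}

theorem mul (hV : IsShiftCombination V P shift coeff)
    (hV' : IsShiftCombination V' P' shift' coeff') :
    IsShiftCombination (V * V') (P ×ˢ P') (fun p => shift p.1 * shift' p.2)
      (fun p => coeff p.1 * coeff' p.2) := by
  intro ψ x
  rw [mul_apply_eq_comp, hV, Finset.sum_product]
  simp only [hV' _, map_sum, mul_assoc, mul_apply_eq_comp]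

theorem apply_single [DecidableEq G] (hV : IsShiftCombination V P shift coeff) (x : G) (u : E) :
    V (lp.single 2 x u) = ∑ i ∈ P, lp.single 2 (x * (shift i)⁻¹) (coeff i u) := by
  refine lp.ext (funext fun y => ?_)
  rw [hV, lp.coeFn_sum, Finset.sum_apply]
  refine Finset.sum_congr rfl fun i _ => ?_
  by_cases hy : y = x * (shift i)⁻¹
  · simp [hy]
  · have : y * shift i ≠ x := fun h => hy (eq_mul_inv_of_mul_eq h)
    simp [hy, this]

protected theorem star [CompleteSpace E] (hV : IsShiftCombination V P shift coeff) :
    IsShiftCombination (star V) P (fun i => (shift i)⁻¹) (fun i => star (coeff i)) := by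
  classical
  intro φ x
  refine ext_inner_left 𝕜 fun (u : E) => ?_
  calc ⟪u, star V φ x⟫_𝕜
      = ⟪lp.single 2 x u, star V φ⟫_𝕜 :=
        (lp.inner_single_left (𝕜 := 𝕜) (G := fun _ : G => E) x u _).symm
    _ = ⟪V (lp.single 2 x u), φ⟫_𝕜 := by
        rw [ContinuousLinearMap.star_eq_adjoint, ContinuousLinearMap.adjoint_inner_right]
    _ = ∑ i ∈ P, ⟪u, star (coeff i) (φ (x * (shift i)⁻¹))⟫_𝕜 := by
        simp only [hV.apply_single, sum_inner, lp.inner_single_left,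
          ContinuousLinearMap.star_eq_adjoint, ContinuousLinearMap.adjoint_inner_right]
    _ = ⟪u, ∑ i ∈ P, star (coeff i) (φ (x * (shift i)⁻¹))⟫_𝕜 := (inner_sum _ _ _).symm

theorem eq_one_iff [DecidableEq G] (hV : IsShiftCombination V P shift coeff) :
    V = 1 ↔ ∀ g, (∑ i ∈ P, if shift i = g then coeff i else 0) = if g = 1 then 1 else 0 := by
  constructor
  · rintro rfl g
    refine ContinuousLinearMap.ext fun u => ?_
    have hδ := hV (lp.single 2 g u) 1
    simp only [one_apply_eq_self, lp.single_apply, one_mul] at hδ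
    simp only [_root_.sum_apply, DFunLike.ite_apply, zero_apply,
      one_apply_eq_self, Pi.single_apply, apply_ite (coeff _), map_zero, eq_comm (b := g)] at hδ ⊢
    exact hδ.symm
  · intro hK
    refine ContinuousLinearMap.ext fun ψ => lp.ext (funext fun x => ?_)
    rw [hV, one_apply_eq_self]
    have hmaps : ∀ i ∈ P, shift i ∈ insert 1 (P.image shift) :=
      fun i hi => Finset.mem_insert_of_mem (Finset.mem_image_of_mem shift hi)
    calc ∑ i ∈ P, coeff i (ψ (x * shift i))
        = ∑ g ∈ insert 1 (P.image shift), ∑ i ∈ P with shift i = g, coeff i (ψ (x * g)) := by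
          rw [← Finset.sum_fiberwise_of_maps_to hmaps]
          refine Finset.sum_congr rfl fun g _ => Finset.sum_congr rfl fun i hi => ?_
          rw [(Finset.mem_filter.mp hi).2]
      _ = ∑ g ∈ insert 1 (P.image shift),
            (∑ i ∈ P, if shift i = g then coeff i else 0) (ψ (x * g)) := by
          simp only [Finset.sum_filter, _root_.sum_apply, DFunLike.ite_apply, zero_apply]
      _ = ψ x := by
          simp only [hK, DFunLike.ite_apply, one_apply_eq_self, zero_apply,
            Finset.sum_ite_eq', Finset.mem_insert_self, if_true, mul_one]

end IsShiftCombination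

end ShiftCombination

theorem Matrix.toEuclideanCLM_sum_ite_eq_ite_iff {𝕜 n ι : Type*} [RCLike 𝕜] [Fintype n]
    [DecidableEq n] (P : Finset ι) (c : ι → Prop) [DecidablePred c] (M : ι → Matrix n n 𝕜)
    (b : Prop) [Decidable b] :
    (∑ i ∈ P, if c i then toEuclideanCLM (𝕜 := 𝕜) (M i) else 0) = (if b then 1 else 0) ↔
      (∑ i ∈ P, if c i then M i else 0) = if b then 1 else 0 := by
  rw [← EmbeddingLike.apply_eq_iff_eq (toEuclideanCLM (𝕜 := 𝕜) (n := n))]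
  simp only [map_sum, apply_ite (⇑(toEuclideanCLM (𝕜 := 𝕜) (n := n))), map_one, map_zero]

open Matrix

theorem qw_operator_unitary_iff_general
    {G : Type*} [Group G] [DecidableEq G] (s : ℕ)
    (S : Finset G) (A : G → Matrix (Fin s) (Fin s) ℂ)
    (W : lp (fun _ : G => EuclideanSpace ℂ (Fin s)) 2 →L[ℂ]
         lp (fun _ : G => EuclideanSpace ℂ (Fin s)) 2)
    (hW : ∀ (ψ : lp (fun _ : G => EuclideanSpace ℂ (Fin s)) 2) (x : G),
      (W ψ) x = ∑ h ∈ S, (A h).mulVec ((ψ (x * h) : EuclideanSpace ℂ (Fin s)))) :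
    (Function.Surjective W ∧ ∀ ψ, ‖W ψ‖ = ‖ψ‖) ↔
      (∀ g : G,
        (∑ p ∈ S ×ˢ S, if p.1 * p.2⁻¹ = g then A p.1 * (A p.2)ᴴ else 0) =
          (if g = 1 then (1 : Matrix (Fin s) (Fin s) ℂ) else 0) ∧
        (∑ p ∈ S ×ˢ S, if p.1⁻¹ * p.2 = g then (A p.1)ᴴ * A p.2 else 0) =
          (if g = 1 then (1 : Matrix (Fin s) (Fin s) ℂ) else 0)) := by
  have hW' : IsShiftCombination W S id (fun h => toEuclideanCLM (𝕜 := ℂ) (n := Fin s) (A h)) :=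
    fun ψ x => WithLp.ofLp_injective 2 (by simpa [WithLp.ofLp_sum] using hW ψ x)
  rw [ContinuousLinearMap.surjective_and_norm_map_iff_mem_unitary, Unitary.mem_iff,
    (hW'.star.mul hW').eq_one_iff, (hW'.mul hW'.star).eq_one_iff, and_comm, ← forall_and]
  simp only [← map_star, ← map_mul, ← star_eq_conjTranspose, id_eq,
    Matrix.toEuclideanCLM_sum_ite_eq_ite_iff]

/-- The quantum walk operator `W = Σ_{h∈S} T_h ⊗ A_h` on `ℓ²(G; ℂˢ)`, acting by
`(Wψ)(x) = Σ_{h∈S} A_h · ψ(x·h)`, is unitary (a surjective linear isometry) if and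
only if the transition matrices satisfy the unitarity conditions: for every `g ∈ G`,
`Σ_{h·h'⁻¹ = g} A_h·A_{h'}ᴴ = δ_{g,e}·I` and `Σ_{h⁻¹·h' = g} A_hᴴ·A_{h'} = δ_{g,e}·I`. -/
theorem qw_operator_unitary_iff
    {G : Type*} [Group G] [DecidableEq G] (s : ℕ) (hs : 1 ≤ s)
    (S : Finset G) (A : G → Matrix (Fin s) (Fin s) ℂ)
    (W : lp (fun _ : G => EuclideanSpace ℂ (Fin s)) 2 →L[ℂ]
         lp (fun _ : G => EuclideanSpace ℂ (Fin s)) 2)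
    (hW : ∀ (ψ : lp (fun _ : G => EuclideanSpace ℂ (Fin s)) 2) (x : G),
      (W ψ) x = ∑ h ∈ S, (A h).mulVec ((ψ (x * h) : EuclideanSpace ℂ (Fin s)))) :
    (Function.Surjective W ∧ ∀ ψ, ‖W ψ‖ = ‖ψ‖) ↔
      (∀ g : G,
        (∑ p ∈ S ×ˢ S, if p.1 * p.2⁻¹ = g then A p.1 * (A p.2)ᴴ else 0) =
          (if g = 1 then (1 : Matrix (Fin s) (Fin s) ℂ) else 0) ∧
        (∑ p ∈ S ×ˢ S, if p.1⁻¹ * p.2 = g then (A p.1)ᴴ * A p.2 else 0) =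
          (if g = 1 then (1 : Matrix (Fin s) (Fin s) ℂ) else 0)) :=
  qw_operator_unitary_iff_general s S A W hW
end
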